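/- arXiv:1701.05179 — 8 statements merged into one kernel-verified Lean document; each statement's English description precedes it below -/
import Mathlib

section
/- Let P_1,...,P_m and W_1,...,W_m be random variables such that for each null index i in H_0: P_i is super-uniform (P[P_i ≤ t] ≤ t for all t in [0,1]), P_i is independent of W_i, the weights are nonnegative, and the sum of all weights equals m almost surely. Then the probability that there exists i in H_0 with P_i ≤ αW_i/m is at most α, for any α in (0,1). -/
/-!
Under independence, conditioning on the weight turns each null rejection probability into
`E[P(P_i ≤ c W_i | W_i)] ≤ c E[W_i]` with `c = α / m`, by super-uniformity (extended to all
thresholds). A union bound over the nulls and `∑ E[W_i] = E[∑ W_i] = m` then bound the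
familywise error by `c m = α`.
-/

open MeasureTheory ProbabilityTheory

namespace ProbabilityTheory

variable {Ω : Type*} [MeasurableSpace Ω]

def IsSuperUniform (X : Ω → ℝ) (μ : Measure Ω) : Prop :=
  ∀ t ∈ Set.Icc (0 : ℝ) 1, μ {ω | X ω ≤ t} ≤ ENNReal.ofReal t

theorem IsSuperUniform.measure_setOf_le_le {μ : Measure Ω} [IsProbabilityMeasure μ]
    {X : Ω → ℝ} (hX : IsSuperUniform X μ) (t : ℝ) :
    μ {ω | X ω ≤ t} ≤ ENNReal.ofReal t := by
  rcases lt_or_ge t 0 with ht0 | ht0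
  · calc μ {ω | X ω ≤ t} ≤ μ {ω | X ω ≤ 0} :=
          measure_mono fun ω (hω : X ω ≤ t) => hω.trans ht0.le
      _ ≤ ENNReal.ofReal 0 := hX 0 ⟨le_rfl, zero_le_one⟩
      _ = ENNReal.ofReal t := by rw [ENNReal.ofReal_zero, ENNReal.ofReal_of_nonpos ht0.le]
  rcases le_or_gt t 1 with ht1 | ht1
  · exact hX t ⟨ht0, ht1⟩
  · calc μ {ω | X ω ≤ t} ≤ 1 := prob_le_one
      _ ≤ ENNReal.ofReal t := by simpa using ht1.le

theorem IsSuperUniform.measure_le_const_mul_le_lintegral {μ : Measure Ω}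
    [IsProbabilityMeasure μ] {X Y : Ω → ℝ} (hX : IsSuperUniform X μ) (hXm : AEMeasurable X μ) (hYm : AEMeasurable Y μ)
    (hXY : IndepFun X Y μ) {c : ℝ} (hc : 0 ≤ c) :
    μ {ω | X ω ≤ c * Y ω} ≤ ENNReal.ofReal c * ∫⁻ ω, ENNReal.ofReal (Y ω) ∂μ := by
  set S : Set (ℝ × ℝ) := {p | p.2 ≤ c * p.1}
  have hS : MeasurableSet S := measurableSet_le measurable_snd (by fun_prop)
  have hmap : μ.map (fun ω => (Y ω, X ω)) = (μ.map Y).prod (μ.map X) :=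
    (indepFun_iff_map_prod_eq_prod_map_map hYm hXm).mp hXY.symm
  have hsection (w : ℝ) : μ.map X (Prod.mk w ⁻¹' S) ≤ ENNReal.ofReal c * ENNReal.ofReal w := by
    rw [← ENNReal.ofReal_mul hc, show Prod.mk w ⁻¹' S = Set.Iic (c * w) from rfl,
      Measure.map_apply_of_aemeasurable hXm measurableSet_Iic]
    exact hX.measure_setOf_le_le (c * w)
  calc μ {ω | X ω ≤ c * Y ω} = μ.map (fun ω => (Y ω, X ω)) S :=
        (Measure.map_apply_of_aemeasurable (hYm.prodMk hXm) hS).symm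
    _ = ∫⁻ w, μ.map X (Prod.mk w ⁻¹' S) ∂(μ.map Y) := by rw [hmap, Measure.prod_apply hS]
    _ ≤ ∫⁻ w, ENNReal.ofReal c * ENNReal.ofReal w ∂(μ.map Y) := lintegral_mono hsection
    _ = ENNReal.ofReal c * ∫⁻ w, ENNReal.ofReal w ∂(μ.map Y) :=
        lintegral_const_mul _ ENNReal.measurable_ofReal
    _ = ENNReal.ofReal c * ∫⁻ ω, ENNReal.ofReal (Y ω) ∂μ := by
        rw [lintegral_map' ENNReal.measurable_ofReal.aemeasurable hYm]

end ProbabilityTheory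

theorem MeasureTheory.sum_lintegral_ofReal_eq_of_sum_eq {Ω ι : Type*} [MeasurableSpace Ω]
    [Fintype ι] {μ : Measure Ω} [IsProbabilityMeasure μ] {W : ι → Ω → ℝ}
    (hWm : ∀ i, AEMeasurable (W i) μ) (hW : ∀ i, 0 ≤ᵐ[μ] W i) {s : ℝ}
    (hsum : ∀ᵐ ω ∂μ, ∑ i, W i ω = s) :
    ∑ i, ∫⁻ ω, ENNReal.ofReal (W i ω) ∂μ = ENNReal.ofReal s := by
  have hpointwise : ∀ᵐ ω ∂μ, ∑ i, ENNReal.ofReal (W i ω) = ENNReal.ofReal s := by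
    filter_upwards [hsum, ae_all_iff.mpr hW] with ω hω hω0
    rw [← ENNReal.ofReal_sum_of_nonneg fun i _ => hω0 i, hω]
  rw [← lintegral_finsetSum' _ fun i _ => (hWm i).ennreal_ofReal, lintegral_congr_ae hpointwise,
    lintegral_const, measure_univ, mul_one]

/-- **IHW-Bonferroni FWER control (Theorem 1a).**
If for each null index `i ∈ H0` the p-value `P i` is super-uniform and independent of its
weight `W i`, the weights are nonnegative and sum to `m` almost surely, then the probability
that some null hypothesis is rejected by the weighted Bonferroni rule `P i ≤ α * W i / m`
is at most `α`. -/
theorem ihw_bonferroni_fwer_control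
    {Ω : Type*} [MeasurableSpace Ω] (μ : Measure Ω) [IsProbabilityMeasure μ]
    (m : ℕ) (hm : 0 < m) (H0 : Finset (Fin m))
    (P W : Fin m → Ω → ℝ)
    (hPmeas : ∀ i, Measurable (P i)) (hWmeas : ∀ i, Measurable (W i))
    (hsuper : ∀ i ∈ H0, ∀ t ∈ Set.Icc (0 : ℝ) 1,
      μ {ω | P i ω ≤ t} ≤ ENNReal.ofReal t)
    (hindep : ∀ i ∈ H0, IndepFun (P i) (W i) μ)
    (hWnonneg : ∀ i, ∀ ω, 0 ≤ W i ω)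
    (hWsum : ∀ᵐ ω ∂μ, ∑ i, W i ω = (m : ℝ))
    (α : ℝ) (hα : α ∈ Set.Ioo (0 : ℝ) 1) :
    μ {ω | ∃ i ∈ H0, P i ω ≤ α * W i ω / m} ≤ ENNReal.ofReal α := by
  have hc : 0 ≤ α / m := div_nonneg hα.1.le m.cast_nonneg
  have hunion : {ω | ∃ i ∈ H0, P i ω ≤ α * W i ω / m}
      = ⋃ i ∈ H0, {ω | P i ω ≤ α / m * W i ω} := by
    ext ω; simp [mul_div_right_comm]
  rw [hunion]
  calc μ (⋃ i ∈ H0, {ω | P i ω ≤ α / m * W i ω})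
      ≤ ∑ i ∈ H0, μ {ω | P i ω ≤ α / m * W i ω} := measure_biUnion_finset_le _ _
    _ ≤ ∑ i ∈ H0, ENNReal.ofReal (α / m) * ∫⁻ ω, ENNReal.ofReal (W i ω) ∂μ :=
        Finset.sum_le_sum fun i hi =>
          IsSuperUniform.measure_le_const_mul_le_lintegral (hsuper i hi)
            (hPmeas i).aemeasurable (hWmeas i).aemeasurable (hindep i hi) hc
    _ ≤ ∑ i, ENNReal.ofReal (α / m) * ∫⁻ ω, ENNReal.ofReal (W i ω) ∂μ :=
        Finset.sum_le_sum_of_subset (Finset.subset_univ _)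
    _ = ENNReal.ofReal (α / m) * ENNReal.ofReal m := by
        rw [← Finset.mul_sum, sum_lintegral_ofReal_eq_of_sum_eq (fun i => (hWmeas i).aemeasurable)
          (fun i => .of_forall (hWnonneg i)) hWsum]
    _ = ENNReal.ofReal α := by
        rw [← ENNReal.ofReal_mul hc, div_mul_cancel₀ α (Nat.cast_ne_zero.mpr hm.ne')]
end

section
/- Suppose hypotheses {1,...,m} are partitioned into folds I_1,...,I_K such that the tuples ((P_i,X_i))_{i∈I_l} are jointly independent across folds, and for each fold l and each null i ∈ H_0 ∩ I_l, P_i is independent of (X_j)_{j∈I_l}. If the IHW weight vector on fold I_l is a measurable function only of the p-values outside I_l and of all covariates X_1,...,X_m, then for each null i ∈ H_0 ∩ I_l, P_i is independent of the random vector (W_k)_{k∈I_l}; in particular P_i ⊥ W_i. -/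
open MeasureTheory ProbabilityTheory

/-!
Fix a null `i` in fold `l`. Independence of the folds makes the in-fold pair `(P i, X_{I_l})`
independent of the out-of-fold pairs `(P_j, X_j)_{j ∉ I_l}`; together with `P i ⟂ X_{I_l}` this
gives `P i ⟂ (X_{I_l}, (P_j, X_j)_{j ∉ I_l})`, and the weights on fold `l` are a measurable
function of the latter vector.
-/

section

variable {Ω β γ δ : Type*} {mΩ : MeasurableSpace Ω} [MeasurableSpace β] [MeasurableSpace γ]
  [MeasurableSpace δ] {μ : Measure Ω}

lemma IndepFun.indepFun_prodMk_of_indepFun_prodMk [IsFiniteMeasure μ]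
    {A : Ω → β} {B : Ω → γ} {C : Ω → δ}
    (hA : AEMeasurable A μ) (hB : AEMeasurable B μ) (hC : AEMeasurable C μ)
    (hAB : A ⟂ᵢ[μ] B) (hABC : (fun ω => (A ω, B ω)) ⟂ᵢ[μ] C) :
    A ⟂ᵢ[μ] (fun ω => (B ω, C ω)) := by
  have hBC : B ⟂ᵢ[μ] C := hABC.comp measurable_snd measurable_id
  rw [indepFun_iff_map_prod_eq_prod_map_map hA (hB.prodMk hC)]
  rw [indepFun_iff_map_prod_eq_prod_map_map (hA.prodMk hB) hC] at hABC
  rw [indepFun_iff_map_prod_eq_prod_map_map hA hB] at hAB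
  rw [indepFun_iff_map_prod_eq_prod_map_map hB hC] at hBC
  calc μ.map (fun ω => (A ω, (B ω, C ω)))
      = (μ.map (fun ω => ((A ω, B ω), C ω))).map MeasurableEquiv.prodAssoc := by
        rw [AEMeasurable.map_map_of_aemeasurable
          MeasurableEquiv.prodAssoc.measurable.aemeasurable ((hA.prodMk hB).prodMk hC)]
        rfl
    _ = (μ.map A).prod ((μ.map B).prod (μ.map C)) := by
        rw [hABC, hAB, Measure.prodAssoc_prod]
    _ = (μ.map A).prod (μ.map (fun ω => (B ω, C ω))) := by rw [hBC]

lemma iIndepFun.indepFun_block_compl {ι κ : Type*} [Fintype κ] [DecidableEq κ]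
    {Z : ι → Ω → β} (hZ : ∀ j, Measurable (Z j)) {I : κ → Finset ι}
    (hcover : ∀ j, ∃ l, j ∈ I l) (h : iIndepFun (fun l ω (j : {j // j ∈ I l}) => Z j ω) μ)
    (l : κ) :
    (fun ω (j : {j // j ∈ I l}) => Z j ω) ⟂ᵢ[μ] (fun ω (j : {j // j ∉ I l}) => Z j ω) := by
  have hfold (j : {j // j ∉ I l}) : ∃ l' ∈ ({l}ᶜ : Finset κ), j.1 ∈ I l' := by
    obtain ⟨l', hl'⟩ := hcover j
    exact ⟨l', Finset.mem_compl.2 fun h => j.2 (Finset.mem_singleton.1 h ▸ hl'), hl'⟩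
  choose fold hfold_compl hmem_fold using hfold
  have hblocks := h.indepFun_finset {l} {l}ᶜ disjoint_compl_right
    fun l' => measurable_pi_lambda _ fun j => hZ j
  exact hblocks.comp (measurable_pi_apply (⟨l, Finset.mem_singleton_self l⟩ : ({l} : Finset κ)))
    (measurable_pi_lambda _ fun j =>
      (measurable_pi_apply (⟨j.1, hmem_fold j⟩ : {j' // j' ∈ I (fold j)})).comp
        (measurable_pi_apply (⟨fold j, hfold_compl j⟩ : ({l}ᶜ : Finset κ))))

lemma IndepFun.prodMk_of_prodMk_piEquivPiSubtypeProd {ι : Type*}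
    {π : ι → Type*} [∀ j, MeasurableSpace (π j)] (p : ι → Prop) [DecidablePred p]
    {A : Ω → β} {B : Ω → γ} {Y : Ω → ∀ j, π j}
    (h : A ⟂ᵢ[μ] fun ω => (B ω, Equiv.piEquivPiSubtypeProd p π (Y ω))) :
    A ⟂ᵢ[μ] fun ω => (B ω, Y ω) := by
  convert h.comp measurable_id
    (measurable_id.prodMap (measurable_piEquivPiSubtypeProd_symm π p)) using 1
  · rfl
  · funext ω
    exact congrArg _ ((Equiv.piEquivPiSubtypeProd p π).symm_apply_apply _).symm

end

/-- **Cross-weighting independence (Lemma 1).**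
If the hypotheses are partitioned into folds that are jointly independent (as (p-value,
covariate) pairs), within each fold each null p-value is independent of the fold's
covariates, and the weights on a fold are a measurable function only of the p-values
outside that fold together with all covariates, then for each null `i` in fold `l`
the p-value `P i` is independent of the weight vector `(W k)_{k ∈ I l}`; in particular
`P i` is independent of `W i`. -/
theorem ihw_cross_weighting_independence
    {Ω : Type*} [MeasurableSpace Ω] (μ : Measure Ω) [IsProbabilityMeasure μ]
    (m K : ℕ) (I : Fin K → Finset (Fin m))
    (hpart : ∀ i : Fin m, ∃! l : Fin K, i ∈ I l)
    (H0 : Finset (Fin m))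
    (P X W : Fin m → Ω → ℝ)
    (hPmeas : ∀ i, Measurable (P i)) (hXmeas : ∀ i, Measurable (X i))
    -- independence across folds of the (p-value, covariate) pairs
    (hfold_indep : iIndepFun
      (fun (l : Fin K) (ω : Ω) => fun j : {j : Fin m // j ∈ I l} => (P j ω, X j ω)) μ)
    -- within each fold, each null p-value is independent of the fold's covariates
    (hnull_cov_indep : ∀ l : Fin K, ∀ i ∈ H0, i ∈ I l →
      IndepFun (P i) (fun ω => fun j : {j : Fin m // j ∈ I l} => X j ω) μ)
    -- the weights on fold `l` depend measurably only on out-of-fold p-values and all covariates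
    (hW : ∀ l : Fin K,
      ∃ g : ({j : Fin m // j ∉ I l} → ℝ) × (Fin m → ℝ) → Fin m → ℝ,
        Measurable g ∧
        ∀ k ∈ I l, ∀ ω, W k ω =
          g (fun j : {j : Fin m // j ∉ I l} => P j ω, fun j : Fin m => X j ω) k) :
    ∀ l : Fin K, ∀ i ∈ H0, i ∈ I l →
      (IndepFun (P i) (fun ω => fun k : {k : Fin m // k ∈ I l} => W k ω) μ ∧
        IndepFun (P i) (W i) μ) := by
  intro l i hi0 hil
  obtain ⟨g, hg, hgW⟩ := hW l
  have hPX (j) : Measurable fun ω => (P j ω, X j ω) := (hPmeas j).prodMk (hXmeas j)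
  have hXin : Measurable fun ω (j : {j // j ∈ I l}) => X j ω := by fun_prop
  have hout : Measurable fun ω (j : {j // j ∉ I l}) => (P j ω, X j ω) := by fun_prop
  have hfold_out :=
    iIndepFun.indepFun_block_compl hPX (fun j => (hpart j).exists) hfold_indep l
  have hpair_out : (fun ω => (P i ω, fun j : {j // j ∈ I l} => X j ω)) ⟂ᵢ[μ]
      (fun ω (j : {j // j ∉ I l}) => (P j ω, X j ω)) :=
    hfold_out.comp (φ := fun y : {j // j ∈ I l} → ℝ × ℝ => ((y ⟨i, hil⟩).1, fun j => (y j).2))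
      (by fun_prop) measurable_id
  have hnull_in_out := IndepFun.indepFun_prodMk_of_indepFun_prodMk (hPmeas i).aemeasurable
    hXin.aemeasurable hout.aemeasurable (hnull_cov_indep l i hi0 hil) hpair_out
  have hnull_inputs : P i ⟂ᵢ[μ] fun ω => ((fun j : {j // j ∉ I l} => P j ω), fun j => X j ω) :=
    IndepFun.prodMk_of_prodMk_piEquivPiSubtypeProd (· ∈ I l) <| hnull_in_out.comp measurable_id
      (ψ := fun bc : ({j // j ∈ I l} → ℝ) × ({j // j ∉ I l} → ℝ × ℝ) =>
        ((fun j => (bc.2 j).1), (bc.1, fun j => (bc.2 j).2))) (by fun_prop)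
  have hW_fold : P i ⟂ᵢ[μ] fun ω (k : {k // k ∈ I l}) => W k ω := by
    have hW_eq : (fun ω (k : {k // k ∈ I l}) => W k ω) = (fun v k => g v k.1) ∘
        fun ω => ((fun j : {j // j ∉ I l} => P j ω), fun j => X j ω) :=
      funext fun ω => funext fun k => hgW k k.2 ω
    rw [hW_eq]
    exact hnull_inputs.comp measurable_id (by fun_prop)
  exact ⟨hW_fold, hW_fold.comp measurable_id
    (measurable_pi_apply (⟨i, hil⟩ : {k // k ∈ I l}))⟩
end

section
/- Let U be a super-uniform random variable on [0,1], S > 0 another random variable, and β(r) = ∫_0^r x dν(x) a reshaping function for a probability measure ν on the positive reals. Then for all t > 0, E[ 1{U ≤ t β(S)} / (t S) ] ≤ 1. -/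
open MeasureTheory Set
open scoped ENNReal

/-! Since `1 / s = ∫_{z > s} z⁻² dz` and `β` is nondecreasing, pointwise
`1{U ≤ c β(S)} / S ≤ ∫ 1{U ≤ c β(z)} z⁻² dz`. Taking expectations (Tonelli) and using
super-uniformity bounds the mean by `c ∫ β(z) z⁻² dz`, and a second application of Tonelli gives
`∫ β(z) z⁻² dz = ∫ y (∫_{z ≥ y} z⁻² dz) dν(y) = ν (0, ∞) ≤ 1`. -/

noncomputable def reshaping (ν : Measure ℝ) (r : ℝ) : ℝ := ∫ x in Ioc 0 r, x ∂ν

def SuperUniform {Ω : Type*} [MeasurableSpace Ω] (μ : Measure Ω) (U : Ω → ℝ) : Prop :=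
  ∀ u ∈ Icc (0 : ℝ) 1, μ {ω | U ω ≤ u} ≤ ENNReal.ofReal u

theorem SuperUniform.measure_le_ofReal {Ω : Type*} [MeasurableSpace Ω] {μ : Measure Ω}
    [IsZeroOrProbabilityMeasure μ] {U : Ω → ℝ} (hU : SuperUniform μ U) (u : ℝ) :
    μ {ω | U ω ≤ u} ≤ ENNReal.ofReal u := by
  rcases lt_or_ge u 0 with hu | hu
  · calc μ {ω | U ω ≤ u} ≤ μ {ω | U ω ≤ 0} := measure_mono fun ω hω => le_trans hω hu.le
        _ ≤ ENNReal.ofReal 0 := hU 0 ⟨le_rfl, zero_le_one⟩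
        _ ≤ ENNReal.ofReal u := by simp
  rcases le_or_gt u 1 with hu' | hu'
  · exact hU u ⟨hu, hu'⟩
  · exact prob_le_one.trans (ENNReal.one_le_ofReal.mpr hu'.le)

theorem lintegral_Ioi_inv_sq {c : ℝ} (hc : 0 < c) :
    ∫⁻ x in Ioi c, ENNReal.ofReal (x ^ 2)⁻¹ = ENNReal.ofReal c⁻¹ := by
  have hrpow : EqOn (fun x : ℝ => (x ^ 2)⁻¹) (fun x => x ^ (-2 : ℝ)) (Ioi c) := fun x hx => by
    simp [Real.rpow_neg (hc.trans hx).le]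
  rw [← ofReal_integral_eq_lintegral_ofReal, setIntegral_congr_fun measurableSet_Ioi hrpow,
    integral_Ioi_rpow_of_lt (by norm_num) hc]
  · norm_num [Real.rpow_neg_one]
  · exact (integrableOn_Ioi_rpow_of_lt (by norm_num) hc).congr_fun hrpow.symm measurableSet_Ioi
  · exact Filter.Eventually.of_forall fun x => by positivity

theorem integral_le_of_lintegral_ofReal_le {α : Type*} [MeasurableSpace α] {μ : Measure α}
    {f : α → ℝ} (hf : 0 ≤ᵐ[μ] f) {c : ℝ} (hc : 0 ≤ c)
    (h : ∫⁻ a, ENNReal.ofReal (f a) ∂μ ≤ ENNReal.ofReal c) : ∫ a, f a ∂μ ≤ c := by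
  -- no measurability of `f` is needed: `‖∫ f‖ₑ ≤ ∫⁻ ‖f‖ₑ` holds for every `f`
  have hnorm : ‖∫ a, f a ∂μ‖ₑ ≤ ENNReal.ofReal c := by
    refine (enorm_integral_le_lintegral_enorm f).trans (le_of_eq_of_le ?_ h)
    exact lintegral_congr_ae (hf.mono fun a ha => Real.enorm_of_nonneg ha)
  rw [Real.enorm_eq_ofReal_abs, ENNReal.ofReal_le_ofReal_iff hc] at hnorm
  exact (le_abs_self _).trans hnorm

theorem ofReal_inv_le_lintegral_indicator_inv_sq {g : ℝ → ℝ} (hg : Monotone g) {s u : ℝ}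
    (hs : 0 < s) (hu : u ≤ g s) :
    ENNReal.ofReal s⁻¹ ≤ ∫⁻ z, {z | u ≤ g z}.indicator (fun z => ENNReal.ofReal (z ^ 2)⁻¹) z := by
  rw [← lintegral_Ioi_inv_sq hs]
  refine (setLIntegral_mono' measurableSet_Ioi fun z hz => ?_).trans
    (setLIntegral_le_lintegral _ _)
  rw [indicator_of_mem (show z ∈ {z | u ≤ g z} from hu.trans (hg hz.le))]

theorem lintegral_indicator_Ioc_mul_inv_sq (y : ℝ) :
    ∫⁻ z, (Ioc 0 z).indicator (fun y => ENNReal.ofReal y) y * ENNReal.ofReal (z ^ 2)⁻¹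
      = (Ioi 0).indicator 1 y := by
  rcases le_or_gt y 0 with hy | hy
  · have hy_notMem (z : ℝ) : y ∉ Ioc 0 z := fun h => hy.not_gt h.1
    simp [hy_notMem, indicator_of_notMem (show y ∉ Ioi 0 from not_lt.mpr hy)]
  · have hIci (z : ℝ) : (Ioc 0 z).indicator (fun y => ENNReal.ofReal y) y * ENNReal.ofReal (z ^ 2)⁻¹
        = (Ici y).indicator (fun z => ENNReal.ofReal y * ENNReal.ofReal (z ^ 2)⁻¹) z := by
      by_cases hz : y ≤ z <;> simp [hz, hy]
    simp_rw [hIci]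
    rw [lintegral_indicator measurableSet_Ici, ← restrict_Ioi_eq_restrict_Ici,
      lintegral_const_mul _ (by fun_prop), lintegral_Ioi_inv_sq hy, ← ENNReal.ofReal_mul hy.le,
      mul_inv_cancel₀ hy.ne', indicator_of_mem (show y ∈ Ioi 0 from hy)]
    simp

section reshaping

variable {ν : Measure ℝ}

theorem reshaping_nonneg (r : ℝ) : 0 ≤ reshaping ν r :=
  setIntegral_nonneg measurableSet_Ioc fun _ hx => hx.1.le

theorem reshaping_of_nonpos {r : ℝ} (hr : r ≤ 0) : reshaping ν r = 0 := by
  simp [reshaping, Ioc_eq_empty (not_lt.mpr hr)]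

variable [IsLocallyFiniteMeasure ν]

theorem integrableOn_id_Ioc (r : ℝ) : IntegrableOn (fun x => x) (Ioc 0 r) ν :=
  continuous_id.integrableOn_Icc.mono_set Ioc_subset_Icc_self

theorem monotone_reshaping : Monotone (reshaping ν) := by
  intro a b hab
  rcases le_or_gt a 0 with ha | ha
  · rw [reshaping_of_nonpos ha]
    exact reshaping_nonneg b
  · refine setIntegral_mono_set (integrableOn_id_Ioc b) ?_ (Ioc_subset_Ioc_right hab).eventuallyLE
    filter_upwards [ae_restrict_mem measurableSet_Ioc] with x hx using hx.1.le

theorem ofReal_reshaping (r : ℝ) :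
    ENNReal.ofReal (reshaping ν r) = ∫⁻ y in Ioc 0 r, ENNReal.ofReal y ∂ν := by
  refine ofReal_integral_eq_lintegral_ofReal (integrableOn_id_Ioc r) ?_
  filter_upwards [ae_restrict_mem measurableSet_Ioc] with x hx using hx.1.le

theorem lintegral_ofReal_reshaping_mul_inv_sq :
    ∫⁻ z, ENNReal.ofReal (reshaping ν z) * ENNReal.ofReal (z ^ 2)⁻¹ = ν (Ioi 0) := by
  set K : ℝ → ℝ → ℝ≥0∞ := fun z y =>
    (Ioc 0 z).indicator (fun y => ENNReal.ofReal y) y * ENNReal.ofReal (z ^ 2)⁻¹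
  have hK : Measurable (Function.uncurry K) := by
    refine Measurable.mul ?_ (by fun_prop)
    exact (measurable_snd.ennreal_ofReal).indicator
      ((measurableSet_lt measurable_const measurable_snd).inter
        (measurableSet_le measurable_snd measurable_fst))
  have hz (z : ℝ) :
      ∫⁻ y, K z y ∂ν = ENNReal.ofReal (reshaping ν z) * ENNReal.ofReal (z ^ 2)⁻¹ := by
    rw [lintegral_mul_const _ (ENNReal.measurable_ofReal.indicator measurableSet_Ioc),
      lintegral_indicator measurableSet_Ioc, ofReal_reshaping]
  calc ∫⁻ z, ENNReal.ofReal (reshaping ν z) * ENNReal.ofReal (z ^ 2)⁻¹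
      = ∫⁻ z, ∫⁻ y, K z y ∂ν := by simp_rw [hz]
    _ = ∫⁻ y, (∫⁻ z, K z y) ∂ν := lintegral_lintegral_swap hK.aemeasurable
    _ = ν (Ioi 0) := by
      simp_rw [K, lintegral_indicator_Ioc_mul_inv_sq]
      exact lintegral_indicator_one measurableSet_Ioi

end reshaping

theorem SuperUniform.lintegral_ite_inv_le {Ω : Type*} [MeasurableSpace Ω] {μ : Measure Ω}
    [IsZeroOrProbabilityMeasure μ] {ν : Measure ℝ} [IsLocallyFiniteMeasure ν] {U S : Ω → ℝ}
    (hU : SuperUniform μ U) (hUmeas : Measurable U) (hS : ∀ ω, 0 < S ω) {c : ℝ} (hc : 0 ≤ c) :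
    ∫⁻ ω, ENNReal.ofReal (if U ω ≤ c * reshaping ν (S ω) then (S ω)⁻¹ else 0) ∂μ
      ≤ ENNReal.ofReal c * ν (Ioi 0) := by
  set G : Ω → ℝ → ℝ≥0∞ := fun ω =>
    {z | U ω ≤ c * reshaping ν z}.indicator fun z => ENNReal.ofReal (z ^ 2)⁻¹
  have hG : Measurable (Function.uncurry G) := by
    have hprod : Function.uncurry G = {p : Ω × ℝ | U p.1 ≤ c * reshaping ν p.2}.indicator
        fun p => ENNReal.ofReal (p.2 ^ 2)⁻¹ := by
      ext ⟨ω, z⟩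
      simp [G, indicator_apply]
    rw [hprod]
    exact (by fun_prop : Measurable fun p : Ω × ℝ => ENNReal.ofReal (p.2 ^ 2)⁻¹).indicator
      (measurableSet_le (hUmeas.comp measurable_fst)
        ((monotone_reshaping.measurable.comp measurable_snd).const_mul c))
  have hpointwise : ∀ ω, ENNReal.ofReal (if U ω ≤ c * reshaping ν (S ω) then (S ω)⁻¹ else 0)
      ≤ ∫⁻ z, G ω z := by
    intro ω
    split_ifs with h
    · exact ofReal_inv_le_lintegral_indicator_inv_sq
        (monotone_reshaping.const_mul hc) (hS ω) h
    · simp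
  have hinner (z : ℝ) : ∫⁻ ω, G ω z ∂μ
      ≤ ENNReal.ofReal c * (ENNReal.ofReal (reshaping ν z) * ENNReal.ofReal (z ^ 2)⁻¹) := by
    have hset : MeasurableSet {ω | U ω ≤ c * reshaping ν z} :=
      measurableSet_le hUmeas measurable_const
    have hGz (ω : Ω) : G ω z = {ω | U ω ≤ c * reshaping ν z}.indicator
        (fun _ => ENNReal.ofReal (z ^ 2)⁻¹) ω := by
      simp [G, indicator_apply]
    calc ∫⁻ ω, G ω z ∂μ
        = ENNReal.ofReal (z ^ 2)⁻¹ * μ {ω | U ω ≤ c * reshaping ν z} := by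
          rw [lintegral_congr hGz, lintegral_indicator_const hset]
      _ ≤ ENNReal.ofReal (z ^ 2)⁻¹ * ENNReal.ofReal (c * reshaping ν z) := by
          gcongr
          exact hU.measure_le_ofReal _
      _ = _ := by
          rw [ENNReal.ofReal_mul hc]
          ring
  calc ∫⁻ ω, ENNReal.ofReal (if U ω ≤ c * reshaping ν (S ω) then (S ω)⁻¹ else 0) ∂μ
      ≤ ∫⁻ ω, (∫⁻ z, G ω z) ∂μ := lintegral_mono hpointwise
    _ = ∫⁻ z, ∫⁻ ω, G ω z ∂μ := lintegral_lintegral_swap hG.aemeasurable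
    _ ≤ ∫⁻ z, ENNReal.ofReal c * (ENNReal.ofReal (reshaping ν z) * ENNReal.ofReal (z ^ 2)⁻¹) :=
      lintegral_mono hinner
    _ = ENNReal.ofReal c * ν (Ioi 0) := by
      rw [lintegral_const_mul' _ _ ENNReal.ofReal_ne_top, lintegral_ofReal_reshaping_mul_inv_sq]

theorem blanchard_roquain_reshaping_general
    {Ω : Type*} [MeasurableSpace Ω] (μ : Measure Ω) [IsProbabilityMeasure μ]
    (ν : Measure ℝ) [IsProbabilityMeasure ν]
    (U S : Ω → ℝ) (hUmeas : Measurable U)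
    (hUsuper : ∀ u ∈ Set.Icc (0 : ℝ) 1, μ {ω | U ω ≤ u} ≤ ENNReal.ofReal u)
    (hSpos : ∀ ω, 0 < S ω)
    (β : ℝ → ℝ) (hβ : ∀ r, β r = ∫ x in Set.Ioc (0 : ℝ) r, x ∂ν)
    (t : ℝ) (ht : 0 < t) :
    ∫ ω, (if U ω ≤ t * β (S ω) then (t * S ω)⁻¹ else 0) ∂μ ≤ 1 := by
  obtain rfl : β = reshaping ν := funext hβ
  have hnonneg : ∀ ω, 0 ≤ if U ω ≤ t * reshaping ν (S ω) then (t * S ω)⁻¹ else 0 := fun ω => by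
    have := hSpos ω
    split_ifs <;> positivity
  have hfactor : ∀ ω, ENNReal.ofReal (if U ω ≤ t * reshaping ν (S ω) then (t * S ω)⁻¹ else 0)
      = ENNReal.ofReal t⁻¹ *
        ENNReal.ofReal (if U ω ≤ t * reshaping ν (S ω) then (S ω)⁻¹ else 0) := fun ω => by
    split_ifs
    · rw [mul_inv, ENNReal.ofReal_mul (inv_nonneg.2 ht.le)]
    · simp
  refine integral_le_of_lintegral_ofReal_le (Filter.Eventually.of_forall hnonneg) zero_le_one ?_
  calc ∫⁻ ω, ENNReal.ofReal (if U ω ≤ t * reshaping ν (S ω) then (t * S ω)⁻¹ else 0) ∂μ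
      = ENNReal.ofReal t⁻¹ *
        ∫⁻ ω, ENNReal.ofReal (if U ω ≤ t * reshaping ν (S ω) then (S ω)⁻¹ else 0) ∂μ := by
        simp_rw [hfactor]
        exact lintegral_const_mul' _ _ ENNReal.ofReal_ne_top
    _ ≤ ENNReal.ofReal t⁻¹ * (ENNReal.ofReal t * ν (Ioi 0)) := by
        gcongr
        exact SuperUniform.lintegral_ite_inv_le hUsuper hUmeas hSpos ht.le
    _ ≤ ENNReal.ofReal 1 := by
        rw [← mul_assoc, ← ENNReal.ofReal_mul (inv_nonneg.2 ht.le), inv_mul_cancel₀ ht.ne',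
          ENNReal.ofReal_one, one_mul]
        exact prob_le_one

/-- **Blanchard–Roquain reshaping lemma.**
Let `U` be super-uniform on `[0,1]`, `S > 0` another random variable, and
`β r = ∫_0^r x dν(x)` the reshaping function of a probability measure `ν` on the
positive reals. Then for every `t > 0`, `E[ 1{U ≤ t β(S)} / (t S) ] ≤ 1`. -/
theorem blanchard_roquain_reshaping
    {Ω : Type*} [MeasurableSpace Ω] (μ : Measure Ω) [IsProbabilityMeasure μ]
    (ν : Measure ℝ) [IsProbabilityMeasure ν] (hν : ν (Set.Iic (0 : ℝ)) = 0)
    (U S : Ω → ℝ) (hUmeas : Measurable U) (hSmeas : Measurable S)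
    (hUsuper : ∀ u ∈ Set.Icc (0 : ℝ) 1, μ {ω | U ω ≤ u} ≤ ENNReal.ofReal u)
    (hSpos : ∀ ω, 0 < S ω)
    (β : ℝ → ℝ) (hβ : ∀ r, β r = ∫ x in Set.Ioc (0 : ℝ) r, x ∂ν)
    (t : ℝ) (ht : 0 < t) :
    ∫ ω, (if U ω ≤ t * β (S ω) then (t * S ω)⁻¹ else 0) ∂μ ≤ 1 :=
  blanchard_roquain_reshaping_general μ ν U S hUmeas hUsuper hSpos β hβ t ht
end

section
/- For a single fold with weights W_1,...,W_n ≥ 0 summing to n, if the null p-values are jointly independent and super-uniform conditionally on the weights, then P[∃ null i : P_i ≤ 1 − (1−α)^{W_i/n}] ≤ 1 − E[(1−α)^{Σ_{nulls} W_i / n}] ≤ α. -/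
/-!
Put `t i = 1 - (1 - α) ^ (W i / n)`, so that
`∏_{i null} (1 - t i) = (1 - α) ^ (∑_{i null} W i / n)`.
If the thresholds `t i` were constants, conditional independence and super-uniformity would give
`P[∀ null i, P i > t i | W] ≥ ∏ (1 - t i)` directly. They are only `σ(W)`-measurable, so we round
them up to the grid `(1/m) ℕ`: on each cell of the rounding map, which is a `σ(W)`-measurable
event, the thresholds are constant, and rounding costs at most `#N / m` in the product.
Letting `m → ∞` gives the first inequality; the second is `∑_{i null} W i ≤ n`.
-/

open MeasureTheory ProbabilityTheory Set Filter

theorem Finset.prod_sub_prod_le_sum_sub {ι R : Type*} [CommRing R] [LinearOrder R]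
    [IsStrictOrderedRing R] (s : Finset ι) {a b : ι → R}
    (hb : ∀ i ∈ s, 0 ≤ b i) (hba : ∀ i ∈ s, b i ≤ a i) (ha : ∀ i ∈ s, a i ≤ 1) :
    ∏ i ∈ s, a i - ∏ i ∈ s, b i ≤ ∑ i ∈ s, (a i - b i) := by
  classical
  induction s using Finset.induction_on with
  | empty => simp
  | insert i s hi ih =>
    simp only [Finset.forall_mem_insert] at hb hba ha
    rw [Finset.prod_insert hi, Finset.prod_insert hi, Finset.sum_insert hi]
    have hB : 0 ≤ ∏ j ∈ s, b j := Finset.prod_nonneg hb.2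
    have hB1 : ∏ j ∈ s, b j ≤ 1 :=
      Finset.prod_le_one hb.2 fun j hj => (hba.2 j hj).trans (ha.2 j hj)
    have hBA : ∏ j ∈ s, b j ≤ ∏ j ∈ s, a j := Finset.prod_le_prod hb.2 hba.2
    have := ih hb.2 hba.2 ha.2
    nlinarith [mul_le_mul_of_nonneg_right ha.1 (sub_nonneg.2 hBA),
      mul_le_mul_of_nonneg_left hB1 (sub_nonneg.2 hba.1)]

theorem Finset.prod_one_sub_le_prod_one_sub_add_card_mul {ι : Type*} (s : Finset ι)
    {t q : ι → ℝ} {δ : ℝ} (ht : ∀ i ∈ s, 0 ≤ t i) (hq : ∀ i ∈ s, q i ≤ 1)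
    (htq : ∀ i ∈ s, q i - t i ∈ Set.Icc 0 δ) :
    ∏ i ∈ s, (1 - t i) ≤ ∏ i ∈ s, (1 - q i) + s.card * δ := by
  have hdiff := s.prod_sub_prod_le_sum_sub (a := fun i => 1 - t i) (b := fun i => 1 - q i)
    (fun i hi => sub_nonneg.2 (hq i hi)) (fun i hi => by linarith [(htq i hi).1])
    (fun i hi => by linarith [ht i hi])
  have hsum := s.sum_le_card_nsmul (fun i => (1 - t i) - (1 - q i)) δ
    fun i hi => by linarith [(htq i hi).2]
  rw [nsmul_eq_mul] at hsum
  linarith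

theorem ceil_mul_div_sub_mem_Icc {x : ℝ} (hx : 0 ≤ x) {m : ℕ} (hm : 0 < m) :
    (⌈m * x⌉₊ : ℝ) / m - x ∈ Icc (0 : ℝ) (1 / m) := by
  have hm' : (0 : ℝ) < m := Nat.cast_pos.2 hm
  rw [div_sub' hm'.ne', mem_Icc, div_le_div_iff_of_pos_right hm']
  exact ⟨div_nonneg (sub_nonneg.2 (Nat.le_ceil _)) hm'.le,
    by linarith [Nat.ceil_lt_add_one (mul_nonneg hm'.le hx)]⟩

def CondSuperUniform {Ω : Type*} (m' : MeasurableSpace Ω) [MeasurableSpace Ω] (X : Ω → ℝ)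
    (μ : Measure Ω) : Prop :=
  ∀ t ∈ Icc (0 : ℝ) 1, μ[(fun ω => if X ω ≤ t then (1 : ℝ) else 0)|m'] ≤ᵐ[μ] fun _ => t

section CondSidak

variable {Ω ι : Type*} {m' mΩ : MeasurableSpace Ω} {μ : Measure Ω}
  [IsFiniteMeasure μ] [Fintype ι]

theorem CondSuperUniform.one_sub_le_condExp_Ioi {X : Ω → ℝ} (hX : Measurable X)
    (hsup : CondSuperUniform m' X μ) (hm : m' ≤ mΩ) {t : ℝ} (ht : t ∈ Icc (0 : ℝ) 1) :
    (fun _ => 1 - t) ≤ᵐ[μ] μ⟦X ⁻¹' Ioi t | m'⟧ := by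
  have hind : (X ⁻¹' Ioi t).indicator (fun _ => (1 : ℝ))
      = (fun _ => (1 : ℝ)) - fun ω => if X ω ≤ t then (1 : ℝ) else 0 := by
    ext ω
    by_cases h : X ω ≤ t <;> simp [h]
  have hint : Integrable (fun ω => if X ω ≤ t then (1 : ℝ) else 0) μ :=
    (integrable_const 1).indicator (measurableSet_le hX measurable_const)
  filter_upwards [condExp_sub (integrable_const 1) hint m', hsup t ht] with ω hsub hle
  rw [hind, hsub, condExp_const hm]
  simp only [Pi.sub_apply]
  linarith

theorem integral_comp_eq_sum_measureReal_preimage {κ : Type*} [Fintype κ] [MeasurableSpace κ]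
    [MeasurableSingletonClass κ] {K : Ω → κ} (hK : Measurable K) (g : κ → ℝ) :
    ∫ ω, g (K ω) ∂μ = ∑ c, μ.real (K ⁻¹' {c}) * g c := by
  rw [← integral_map hK.aemeasurable (Measurable.of_discrete).aestronglyMeasurable,
    integral_fintype Integrable.of_finite]
  simp [map_measureReal_apply hK (measurableSet_singleton _)]

theorem integrable_prod_one_sub {f : ι → Ω → ℝ} (hf : ∀ i, Measurable (f i))
    (hf01 : ∀ i ω, f i ω ∈ Icc (0 : ℝ) 1) : Integrable (fun ω => ∏ i, (1 - f i ω)) μ := by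
  refine .of_bound (by fun_prop : Measurable fun ω => ∏ i, (1 - f i ω)).aestronglyMeasurable
    1 (ae_of_all _ fun ω => ?_)
  have hnonneg : ∀ i ∈ Finset.univ, 0 ≤ 1 - f i ω := fun i _ => sub_nonneg.2 (hf01 i ω).2
  rw [Real.norm_eq_abs, abs_of_nonneg (Finset.prod_nonneg hnonneg)]
  exact Finset.prod_le_one hnonneg fun i _ => by linarith [(hf01 i ω).1]

variable [StandardBorelSpace Ω] {hm : m' ≤ mΩ} {X : ι → Ω → ℝ}

theorem prod_one_sub_le_condExp_iInter_Ioi (hX : ∀ i, Measurable (X i))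
    (hind : iCondIndepFun m' hm X μ) (hsup : ∀ i, CondSuperUniform m' (X i) μ)
    {q : ι → ℝ} (hq : ∀ i, q i ∈ Icc (0 : ℝ) 1) :
    (fun _ => ∏ i, (1 - q i)) ≤ᵐ[μ] μ⟦⋂ i, X i ⁻¹' Ioi (q i) | m'⟧ := by
  have hprod := (iCondIndepFun_iff_condExp_inter_preimage_eq_mul (fun _ => inferInstance)
    X hX).1 hind Finset.univ (sets := fun i => Ioi (q i)) fun i _ => measurableSet_Ioi
  have hfac : ∀ᵐ ω ∂μ, ∀ i, 1 - q i ≤ (μ⟦X i ⁻¹' Ioi (q i) | m'⟧) ω :=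
    ae_all_iff.2 fun i => (hsup i).one_sub_le_condExp_Ioi (hX i) hm (hq i)
  filter_upwards [hprod, hfac] with ω hω hfacω
  simp only [Finset.mem_univ, iInter_true] at hω
  rw [hω, Finset.prod_apply]
  exact Finset.prod_le_prod (fun i _ => sub_nonneg.2 (hq i).2) fun i _ => hfacω i

theorem measureReal_mul_prod_one_sub_le_measureReal_inter_iInter_Ioi
    (hX : ∀ i, Measurable (X i)) (hind : iCondIndepFun m' hm X μ)
    (hsup : ∀ i, CondSuperUniform m' (X i) μ) {q : ι → ℝ} (hq : ∀ i, q i ∈ Icc (0 : ℝ) 1)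
    {A : Set Ω} (hA : MeasurableSet[m'] A) :
    μ.real A * ∏ i, (1 - q i) ≤ μ.real (A ∩ ⋂ i, X i ⁻¹' Ioi (q i)) := by
  have hG : MeasurableSet (⋂ i, X i ⁻¹' Ioi (q i)) :=
    .iInter fun i => hX i measurableSet_Ioi
  calc μ.real A * ∏ i, (1 - q i) = ∫ _ in A, ∏ i, (1 - q i) ∂μ := by
        rw [setIntegral_const, smul_eq_mul]
    _ ≤ ∫ ω in A, (μ⟦⋂ i, X i ⁻¹' Ioi (q i) | m'⟧) ω ∂μ :=
        setIntegral_mono_ae (integrable_const _).integrableOn integrable_condExp.integrableOn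
          (prod_one_sub_le_condExp_iInter_Ioi hX hind hsup hq)
    _ = μ.real (A ∩ ⋂ i, X i ⁻¹' Ioi (q i)) := by
        rw [setIntegral_condExp hm ((integrable_const 1).indicator hG) hA,
          setIntegral_indicator hG, setIntegral_const, smul_eq_mul, mul_one]

theorem measureReal_exists_le_le_sub_integral_prod_of_le_comp
    (hX : ∀ i, Measurable (X i)) (hind : iCondIndepFun m' hm X μ)
    (hsup : ∀ i, CondSuperUniform m' (X i) μ)
    {κ : Type*} [Fintype κ] [MeasurableSpace κ] [MeasurableSingletonClass κ]
    {K : Ω → κ} (hK : Measurable[m'] K) {q : κ → ι → ℝ} (hq : ∀ c i, q c i ∈ Icc (0 : ℝ) 1)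
    {t : ι → Ω → ℝ} (htq : ∀ i ω, t i ω ≤ q (K ω) i) :
    μ.real {ω | ∃ i, X i ω ≤ t i ω} ≤ μ.real univ - ∫ ω, ∏ i, (1 - q (K ω) i) ∂μ := by
  set G := {ω | ∀ i, q (K ω) i < X i ω}
  have hK' : Measurable K := hK.mono hm le_rfl
  have hG : MeasurableSet G := by
    simp only [G, ofPred_forall]
    exact .iInter fun i =>
      measurableSet_lt ((Measurable.of_discrete (f := (q · i))).comp hK') (hX i)
  have hpartition : ∑ c, μ.real (K ⁻¹' {c} ∩ G) = μ.real G := by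
    simpa [measureReal_restrict_apply, hK' (measurableSet_singleton _)] using
      sum_measureReal_preimage_singleton (μ := μ.restrict G) Finset.univ
        fun c _ => hK' (measurableSet_singleton c)
  have hfiber : ∀ c, K ⁻¹' {c} ∩ G = K ⁻¹' {c} ∩ ⋂ i, X i ⁻¹' Ioi (q c i) := by
    intro c
    ext ω
    simp only [mem_inter_iff, mem_preimage, mem_singleton_iff, mem_iInter,
      mem_Ioi, G, mem_ofPred_eq]
    constructor <;> rintro ⟨rfl, h⟩ <;> exact ⟨rfl, h⟩
  calc μ.real {ω | ∃ i, X i ω ≤ t i ω} ≤ μ.real Gᶜ := by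
        refine measureReal_mono fun ω ⟨i, hi⟩ hω => ?_
        exact (hi.trans (htq i ω)).not_gt (hω i)
    _ = μ.real univ - ∑ c, μ.real (K ⁻¹' {c} ∩ G) := by
        rw [measureReal_compl hG, hpartition]
    _ ≤ μ.real univ - ∑ c, μ.real (K ⁻¹' {c}) * ∏ i, (1 - q c i) := by
        gcongr with c
        rw [hfiber]
        exact measureReal_mul_prod_one_sub_le_measureReal_inter_iInter_Ioi hX hind hsup (hq c)
          (hK (measurableSet_singleton c))
    _ = μ.real univ - ∫ ω, ∏ i, (1 - q (K ω) i) ∂μ := by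
        rw [integral_comp_eq_sum_measureReal_preimage hK' fun c => ∏ i, (1 - q c i)]

theorem measureReal_exists_le_le_sub_integral_prod_add_div
    (hX : ∀ i, Measurable (X i)) (hind : iCondIndepFun m' hm X μ)
    (hsup : ∀ i, CondSuperUniform m' (X i) μ) {t : ι → Ω → ℝ} (ht : ∀ i, Measurable[m'] (t i))
    (ht01 : ∀ i ω, t i ω ∈ Icc (0 : ℝ) 1) {m : ℕ} (hm0 : 0 < m) :
    μ.real {ω | ∃ i, X i ω ≤ t i ω}
      ≤ μ.real univ - ∫ ω, ∏ i, (1 - t i ω) ∂μ + μ.real univ * Fintype.card ι / m := by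
  classical
  have hm0' : (0 : ℝ) < m := Nat.cast_pos.2 hm0
  have hceil : ∀ i ω, ⌈m * t i ω⌉₊ < m + 1 := fun i ω =>
    Nat.lt_succ_of_le (Nat.ceil_le.2 (by nlinarith [(ht01 i ω).2]))
  set K : Ω → ι → Fin (m + 1) := fun ω i => Fin.ofNat (m + 1) ⌈m * t i ω⌉₊
  set q : (ι → Fin (m + 1)) → ι → ℝ := fun c i => (c i : ℕ) / m
  have hK : Measurable[m'] K := @measurable_pi_lambda _ _ _ m' _ _ fun i =>
    (measurable_from_nat (f := Fin.ofNat (m + 1))).comp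
      (Nat.measurable_ceil.comp ((ht i).const_mul _))
  have hq : ∀ c i, q c i ∈ Icc (0 : ℝ) 1 := fun c i => ⟨by positivity,
    div_le_one_of_le₀ (by exact_mod_cast Nat.lt_succ_iff.1 (c i).2) hm0'.le⟩
  have htq : ∀ i ω, q (K ω) i - t i ω ∈ Icc (0 : ℝ) (1 / m) := fun i ω => by
    simpa [q, K, Nat.mod_eq_of_lt (hceil i ω)] using ceil_mul_div_sub_mem_Icc (ht01 i ω).1 hm0
  have hpointwise : ∀ ω, ∏ i, (1 - t i ω) ≤ ∏ i, (1 - q (K ω) i) + Fintype.card ι / m := by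
    intro ω
    simpa only [Finset.card_univ, mul_one_div] using
      Finset.prod_one_sub_le_prod_one_sub_add_card_mul Finset.univ
        (fun i _ => (ht01 i ω).1) (fun i _ => (hq _ i).2) fun i _ => htq i ω
  have hmeas_t : ∀ i, Measurable (t i) := fun i => (ht i).mono hm le_rfl
  have hmeas_q : ∀ i, Measurable fun ω => q (K ω) i := fun i =>
    (Measurable.of_discrete (f := (q · i))).comp (hK.mono hm le_rfl)
  have hintegral : ∫ ω, ∏ i, (1 - t i ω) ∂μ
      ≤ ∫ ω, ∏ i, (1 - q (K ω) i) ∂μ + μ.real univ * Fintype.card ι / m := by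
    calc ∫ ω, ∏ i, (1 - t i ω) ∂μ ≤ ∫ ω, (∏ i, (1 - q (K ω) i) + Fintype.card ι / m) ∂μ :=
          integral_mono (integrable_prod_one_sub hmeas_t ht01)
            ((integrable_prod_one_sub hmeas_q fun i ω => hq _ i).add (integrable_const _))
            hpointwise
      _ = _ := by
          rw [integral_add (integrable_prod_one_sub hmeas_q fun i ω => hq _ i)
            (integrable_const _), integral_const, smul_eq_mul, mul_div_assoc]
  linarith [measureReal_exists_le_le_sub_integral_prod_of_le_comp hX hind hsup hK hq
    fun i ω => sub_nonneg.1 (htq i ω).1]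

theorem measureReal_exists_le_le_sub_integral_prod
    (hX : ∀ i, Measurable (X i)) (hind : iCondIndepFun m' hm X μ)
    (hsup : ∀ i, CondSuperUniform m' (X i) μ) {t : ι → Ω → ℝ} (ht : ∀ i, Measurable[m'] (t i))
    (ht01 : ∀ i ω, t i ω ∈ Icc (0 : ℝ) 1) :
    μ.real {ω | ∃ i, X i ω ≤ t i ω} ≤ μ.real univ - ∫ ω, ∏ i, (1 - t i ω) ∂μ := by
  have hlim := tendsto_const_nhds (x := μ.real univ - ∫ ω, ∏ i, (1 - t i ω) ∂μ)
    |>.add (tendsto_const_div_atTop_nhds_zero_nat (μ.real univ * Fintype.card ι))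
  rw [add_zero] at hlim
  exact ge_of_tendsto hlim <| (eventually_gt_atTop 0).mono fun m hm0 =>
    measureReal_exists_le_le_sub_integral_prod_add_div hX hind hsup ht ht01 hm0

end CondSidak

theorem one_sub_rpow_mem_Icc {β x : ℝ} (hβ0 : 0 ≤ β) (hβ1 : β ≤ 1) (hx : 0 ≤ x) :
    1 - β ^ x ∈ Icc (0 : ℝ) 1 :=
  ⟨sub_nonneg.2 (Real.rpow_le_one hβ0 hβ1 hx), sub_le_self _ (Real.rpow_nonneg hβ0 x)⟩

theorem le_integral_rpow_of_ae_le_one {Ω : Type*} {mΩ : MeasurableSpace Ω} {μ : Measure Ω}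
    [IsProbabilityMeasure μ] {β : ℝ} (hβ0 : 0 < β) (hβ1 : β ≤ 1) {s : Ω → ℝ} (hs : Measurable s)
    (hs0 : ∀ ω, 0 ≤ s ω) (hs1 : ∀ᵐ ω ∂μ, s ω ≤ 1) :
    β ≤ ∫ ω, β ^ s ω ∂μ := by
  have hint : Integrable (fun ω => β ^ s ω) μ :=
    .of_bound (measurable_const.pow hs).aestronglyMeasurable 1 (ae_of_all _ fun ω => by
      rw [Real.norm_eq_abs, abs_of_nonneg (Real.rpow_nonneg hβ0.le _)]
      exact Real.rpow_le_one hβ0.le hβ1 (hs0 ω))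
  have := integral_mono_ae (integrable_const β) hint
    (hs1.mono fun ω hω => by simpa using Real.rpow_le_rpow_of_exponent_ge hβ0 hβ1 hω)
  rwa [integral_const, probReal_univ, one_smul] at this

theorem weighted_sidak_fold_bound_general
    {Ω : Type*} [mΩ : MeasurableSpace Ω] [StandardBorelSpace Ω]
    (μ : Measure Ω) [IsProbabilityMeasure μ]
    (n : ℕ) (N : Finset (Fin n))
    (P W : Fin n → Ω → ℝ)
    (hPmeas : ∀ i, Measurable (P i))
    (hWnonneg : ∀ i ω, 0 ≤ W i ω)
    (hWsum : ∀ᵐ ω ∂μ, ∑ i, W i ω = (n : ℝ))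
    -- the σ-algebra generated by the weights
    (mW : MeasurableSpace Ω)
    (hmW : mW = MeasurableSpace.comap (fun ω => fun i : Fin n => W i ω) inferInstance)
    (hle : mW ≤ mΩ)
    -- null p-values are jointly independent conditionally on the weights
    (hcondIndep : iCondIndepFun mW hle
      (fun (i : {i : Fin n // i ∈ N}) (ω : Ω) => P i ω) μ)
    -- null p-values are super-uniform conditionally on the weights
    (hcondSuper : ∀ i ∈ N, ∀ t ∈ Set.Icc (0 : ℝ) 1,
      (μ[(fun ω => if P i ω ≤ t then (1 : ℝ) else 0)|mW]) ≤ᵐ[μ] fun _ => t)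
    (α : ℝ) (hα : α ∈ Set.Ioo (0 : ℝ) 1) :
    (μ {ω | ∃ i ∈ N, P i ω ≤ 1 - Real.rpow (1 - α) (W i ω / n)}).toReal
      ≤ 1 - ∫ ω, Real.rpow (1 - α) ((∑ i ∈ N, W i ω) / n) ∂μ ∧
    1 - ∫ ω, Real.rpow (1 - α) ((∑ i ∈ N, W i ω) / n) ∂μ ≤ α := by
  obtain ⟨hα0, hα1⟩ := hα
  simp only [Real.rpow_eq_pow]
  have hWmW : ∀ i, Measurable[mW] (W i) := by
    subst hmW
    exact fun i => (measurable_pi_apply i).comp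
      (Measurable.of_comap_le (f := fun ω (j : Fin n) => W j ω) le_rfl)
  refine ⟨?_, ?_⟩
  · set t : N → Ω → ℝ := fun i ω => 1 - (1 - α) ^ (W i ω / n)
    have hprod : ∀ ω, (1 - α) ^ ((∑ i ∈ N, W i ω) / n) = ∏ i, (1 - t i ω) := fun ω => by
      rw [Finset.sum_div, ← Finset.sum_coe_sort N, Real.rpow_sum_of_pos (by linarith)]
      simp only [t, sub_sub_cancel]
    have hevent : {ω | ∃ i ∈ N, P i ω ≤ 1 - (1 - α) ^ (W i ω / n)}
        = {ω | ∃ i : N, P i ω ≤ t i ω} := by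
      ext ω
      simp only [mem_ofPred_eq, Subtype.exists, exists_prop, t]
    rw [integral_congr_ae (ae_of_all _ hprod), hevent, ← measureReal_def]
    simpa only [probReal_univ] using measureReal_exists_le_le_sub_integral_prod
      (X := fun (i : N) ω => P i ω) (t := t) (fun i => hPmeas i) hcondIndep
      (fun i => hcondSuper i i.2)
      (fun i => measurable_const.sub (measurable_const.pow ((hWmW i).div_const _)))
      fun i ω => one_sub_rpow_mem_Icc (by linarith) (by linarith)
        (div_nonneg (hWnonneg i ω) n.cast_nonneg)
  · have hsum_le : ∀ᵐ ω ∂μ, (∑ i ∈ N, W i ω) / n ≤ 1 := hWsum.mono fun ω hω =>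
      div_le_one_of_le₀ (hω ▸ Finset.sum_le_sum_of_subset_of_nonneg N.subset_univ
        fun i _ _ => hWnonneg i ω) n.cast_nonneg
    have := le_integral_rpow_of_ae_le_one (sub_pos.2 hα1) (sub_le_self _ hα0.le)
      (((Finset.measurable_sum N fun i _ => hWmW i).div_const _).mono hle le_rfl)
      (fun ω => div_nonneg (Finset.sum_nonneg fun i _ => hWnonneg i ω) n.cast_nonneg) hsum_le
    linarith

/-- **Weighted Šidák within-fold bound.**
For a single fold with nonnegative weights `W 1, …, W n` summing to `n`, if the null
p-values are jointly independent and super-uniform conditionally on the weights, then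
`P[∃ null i : P i ≤ 1 − (1−α)^{W i/n}] ≤ 1 − E[(1−α)^{∑_{nulls} W i / n}] ≤ α`. -/
theorem weighted_sidak_fold_bound
    {Ω : Type*} [mΩ : MeasurableSpace Ω] [StandardBorelSpace Ω] [Nonempty Ω]
    (μ : Measure Ω) [IsProbabilityMeasure μ]
    (n : ℕ) (hn : 0 < n) (N : Finset (Fin n))
    (P W : Fin n → Ω → ℝ)
    (hPmeas : ∀ i, Measurable (P i)) (hWmeas : ∀ i, Measurable (W i))
    (hWnonneg : ∀ i ω, 0 ≤ W i ω)
    (hWsum : ∀ᵐ ω ∂μ, ∑ i, W i ω = (n : ℝ))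
    -- the σ-algebra generated by the weights
    (mW : MeasurableSpace Ω)
    (hmW : mW = MeasurableSpace.comap (fun ω => fun i : Fin n => W i ω) inferInstance)
    (hle : mW ≤ mΩ)
    -- null p-values are jointly independent conditionally on the weights
    (hcondIndep : iCondIndepFun mW hle
      (fun (i : {i : Fin n // i ∈ N}) (ω : Ω) => P i ω) μ)
    -- null p-values are super-uniform conditionally on the weights
    (hcondSuper : ∀ i ∈ N, ∀ t ∈ Set.Icc (0 : ℝ) 1,
      (μ[(fun ω => if P i ω ≤ t then (1 : ℝ) else 0)|mW]) ≤ᵐ[μ] fun _ => t)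
    (α : ℝ) (hα : α ∈ Set.Ioo (0 : ℝ) 1) :
    (μ {ω | ∃ i ∈ N, P i ω ≤ 1 - Real.rpow (1 - α) (W i ω / n)}).toReal
      ≤ 1 - ∫ ω, Real.rpow (1 - α) ((∑ i ∈ N, W i ω) / n) ∂μ ∧
    1 - ∫ ω, Real.rpow (1 - α) ((∑ i ∈ N, W i ω) / n) ∂μ ≤ α :=
  weighted_sidak_fold_bound_general (mΩ := mΩ) μ n N P W hPmeas hWnonneg hWsum mW hmW hle hcondIndep
    hcondSuper α hα
end

section
/- There exist four i.i.d. uniform [0,1] random variables P_1,...,P_4 (all nulls) and a weighting scheme with W_i ∈ {0,2}, Σ W_i = 4, such that each P_i is independent of its own weight W_i, yet applying the weighted BH procedure at level α yields FWER = FDR = α + (α²/4)(1−α) > α. -/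
open MeasureTheory ProbabilityTheory Classical

/-- The number of rejections of the weighted Benjamini–Hochberg procedure at level `α`:
`k* = max {k : at least k hypotheses satisfy P i ≤ α W i k / m}`. -/
noncomputable def wBHRejCount (m : ℕ) (P W : Fin m → ℝ) (α : ℝ) : ℕ :=
  sSup {k : ℕ |
    k ≤ (Finset.univ.filter (fun i : Fin m => P i ≤ α * W i * k / m)).card}

/-- Hypothesis `i` is rejected by the weighted BH procedure at level `α`. -/
noncomputable def wBHRejects (m : ℕ) (P W : Fin m → ℝ) (α : ℝ) (i : Fin m) : Prop :=
  P i ≤ α * W i * (wBHRejCount m P W α) / m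

/-!
Take `Ω = [0,1]⁴` with the uniform product measure and let `P` be the coordinates. Whether
`P 0` lies in the band `[α/2, α]` decides which of `P 2`, `P 3` gets weight `2`, and `P 2` decides
between `P 0` and `P 1` in the same way. Every weight is a function of a p-value other than its
own, so `P i ⊥ W i`, although `W` is far from independent of `P` as a whole. In each
configuration exactly two hypotheses carry weight `2 = m/2`, and weighted BH is then ordinary BH
on that pair: it rejects iff the smaller p-value is `≤ α/2` or both are `≤ α`. Splitting on
whether `P 0` and `P 2` lie in the band, nothing is rejected exactly on four disjoint boxes of
total volume `(1 - α)(1 - α²/4)`, so the rejection probability is `α + α²(1 - α)/4`.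
-/

section WeightedBH

open Finset

variable {m : ℕ} {P W : Fin m → ℝ} {α : ℝ}

noncomputable def wBHPassCount (m : ℕ) (P W : Fin m → ℝ) (α : ℝ) (k : ℕ) : ℕ :=
  #{i | P i ≤ α * W i * k / m}

theorem wBHPassCount_le (k : ℕ) : wBHPassCount m P W α k ≤ m :=
  (card_filter_le _ _).trans (card_fin m).le

theorem bddAbove_wBHPassCount : BddAbove {k | k ≤ wBHPassCount m P W α k} :=
  ⟨m, fun _ hk => hk.trans (wBHPassCount_le _)⟩

theorem wBHRejCount_le_wBHPassCount :
    wBHRejCount m P W α ≤ wBHPassCount m P W α (wBHRejCount m P W α) :=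
  Nat.sSup_mem (s := {k | k ≤ wBHPassCount m P W α k}) ⟨0, Nat.zero_le _⟩
    bddAbove_wBHPassCount

theorem le_wBHRejCount {k : ℕ} (hk : k ≤ wBHPassCount m P W α k) : k ≤ wBHRejCount m P W α :=
  le_csSup bddAbove_wBHPassCount hk

theorem exists_wBHRejects_iff (hP : ∀ i, 0 < P i) :
    (∃ i, wBHRejects m P W α i) ↔ ∃ k, 0 < k ∧ k ≤ wBHPassCount m P W α k := by
  constructor
  · rintro ⟨i, hi⟩
    refine ⟨_, Nat.pos_of_ne_zero fun h0 => ?_, wBHRejCount_le_wBHPassCount⟩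
    rw [wBHRejects, h0, Nat.cast_zero, mul_zero, zero_div] at hi
    exact (hP i).not_ge hi
  · rintro ⟨k, hk0, hk⟩
    have hpos : 0 < wBHPassCount m P W α (wBHRejCount m P W α) :=
      (hk0.trans_le (le_wBHRejCount hk)).trans_le wBHRejCount_le_wBHPassCount
    obtain ⟨i, hi⟩ := card_pos.1 hpos
    exact ⟨i, (mem_filter.1 hi).2⟩

theorem wBHPassCount_of_pair (hP : ∀ t, 0 < P t) {i j : Fin m} (hij : i ≠ j)
    (hW : ∀ t, W t = if t = i ∨ t = j then (m : ℝ) / 2 else 0) (k : ℕ) :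
    wBHPassCount m P W α k =
      (if P i ≤ α * k / 2 then 1 else 0) + (if P j ≤ α * k / 2 then 1 else 0) := by
  have hm : (m : ℝ) ≠ 0 := Nat.cast_ne_zero.2 (Fin.pos i).ne'
  have hthreshold (t : Fin m) (ht : t = i ∨ t = j) : α * W t * k / m = α * k / 2 := by
    rw [hW, if_pos ht]; field_simp
  rw [wBHPassCount, card_filter, ← sum_subset (subset_univ {i, j}), sum_pair hij,
    hthreshold i (.inl rfl), hthreshold j (.inr rfl)]
  intro t _ ht
  have ht' : ¬(t = i ∨ t = j) := by simpa using ht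
  rw [hW, if_neg ht', mul_zero, zero_mul, zero_div, if_neg (hP t).not_ge]

theorem exists_wBHRejects_iff_of_pair (hP : ∀ t, 0 < P t) {i j : Fin m} (hij : i ≠ j)
    (hW : ∀ t, W t = if t = i ∨ t = j then (m : ℝ) / 2 else 0) :
    (∃ t, wBHRejects m P W α t) ↔ P i ≤ α / 2 ∨ P j ≤ α / 2 ∨ (P i ≤ α ∧ P j ≤ α) := by
  simp only [exists_wBHRejects_iff hP, wBHPassCount_of_pair hP hij hW]
  constructor
  · rintro ⟨k, hk0, hk⟩
    have hk2 : k ≤ 2 := hk.trans (by split_ifs <;> norm_num)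
    interval_cases k <;> split_ifs at hk <;> simp_all
  · rintro (hi | hj | ⟨hi, hj⟩)
    · exact ⟨1, one_pos, by simp [hi]⟩
    · exact ⟨1, one_pos, by simp [hj]⟩
    · exact ⟨2, two_pos, by simp [hi, hj]⟩

end WeightedBH

open Set

theorem measurableSet_univ_pi_four {X : Type*} [MeasurableSpace X] {a b c d : Set X}
    (ha : MeasurableSet a) (hb : MeasurableSet b) (hc : MeasurableSet c) (hd : MeasurableSet d) :
    MeasurableSet (univ.pi ![a, b, c, d]) :=
  MeasurableSet.univ_pi fun i => by fin_cases i <;> assumption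

theorem measureReal_univ_pi {ι : Type*} [Fintype ι] {X : ι → Type*} [∀ i, MeasurableSpace (X i)]
    (μ : ∀ i, Measure (X i)) [∀ i, SigmaFinite (μ i)] (s : ∀ i, Set (X i)) :
    (Measure.pi μ).real (univ.pi s) = ∏ i, (μ i).real (s i) := by
  simp [measureReal_def, Measure.pi_pi, ENNReal.toReal_prod]

noncomputable def uniform01 : Measure ℝ := volume.restrict (Icc 0 1)

instance : IsProbabilityMeasure uniform01 := ⟨by simp [uniform01]⟩

theorem uniform01_Iic {t : ℝ} (ht : t ≤ 1) : uniform01 (Iic t) = ENNReal.ofReal t := by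
  rw [uniform01, Measure.restrict_apply measurableSet_Iic,
    show Iic t ∩ Icc 0 1 = Icc 0 t by
      ext x
      simp only [mem_inter_iff, mem_Iic, mem_Icc]
      exact ⟨fun ⟨hxt, h0, _⟩ => ⟨h0, hxt⟩, fun ⟨h0, hxt⟩ => ⟨hxt, h0, hxt.trans ht⟩⟩,
    Real.volume_Icc, sub_zero]

theorem uniform01_real_Icc {a b : ℝ} (ha : 0 ≤ a) (hab : a ≤ b) (hb : b ≤ 1) :
    uniform01.real (Icc a b) = b - a := by
  rw [uniform01, measureReal_restrict_apply measurableSet_Icc,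
    inter_eq_left.2 (Icc_subset_Icc ha hb), Real.volume_real_Icc_of_le hab]

theorem uniform01_real_Ioc {a b : ℝ} (ha : 0 ≤ a) (hab : a ≤ b) (hb : b ≤ 1) :
    uniform01.real (Ioc a b) = b - a := by
  rw [uniform01, measureReal_restrict_apply measurableSet_Ioc,
    inter_eq_left.2 (Ioc_subset_Icc_self.trans (Icc_subset_Icc ha hb)),
    Real.volume_real_Ioc_of_le hab]

theorem uniform01_real_Ioi {a : ℝ} (ha : 0 ≤ a) (ha1 : a ≤ 1) :
    uniform01.real (Ioi a) = 1 - a := by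
  rw [← compl_Iic, probReal_compl_eq_one_sub measurableSet_Iic, measureReal_def,
    uniform01_Iic ha1, ENNReal.toReal_ofReal ha]

theorem iIndepFun_eval_pi {ι Ω : Type*} [Fintype ι] [MeasurableSpace Ω] (μ : ι → Measure Ω)
    [∀ i, IsProbabilityMeasure (μ i)] :
    iIndepFun (fun i (ω : ι → Ω) => ω i) (Measure.pi μ) :=
  iIndepFun_pi (X := fun _ => id) fun _ => aemeasurable_id

theorem pi_uniform01_eval_le {ι : Type*} [Fintype ι] (i : ι) {t : ℝ} (ht : t ≤ 1) :
    Measure.pi (fun _ : ι => uniform01) {ω | ω i ≤ t} = ENNReal.ofReal t :=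
  ((measurePreserving_eval _ i).measure_preimage measurableSet_Iic.nullMeasurableSet).trans
    (uniform01_Iic ht)

theorem ae_pi_uniform01_pos {ι : Type*} [Fintype ι] :
    ∀ᵐ ω ∂Measure.pi (fun _ : ι => uniform01), ∀ i, 0 < ω i := by
  refine ae_all_iff.2 fun i => ?_
  have hpos : ∀ᵐ x ∂uniform01, 0 < x := by
    simp only [ae_iff, not_lt]
    exact (uniform01_Iic zero_le_one).trans ENNReal.ofReal_zero
  exact (measurePreserving_eval _ i).quasiMeasurePreserving.ae hpos

namespace WBHCounterexample

def band (α : ℝ) : Set ℝ := Icc (α / 2) α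

theorem measurableSet_band (α : ℝ) : MeasurableSet (band α) := measurableSet_Icc

noncomputable def switch (α x : ℝ) : ℝ := if x ∈ band α then 2 else 0

noncomputable def weights (α : ℝ) (ω : Fin 4 → ℝ) : Fin 4 → ℝ :=
  ![switch α (ω 2), 2 - switch α (ω 2), switch α (ω 0), 2 - switch α (ω 0)]

theorem switch_eq_zero_or_two (α x : ℝ) : switch α x = 0 ∨ switch α x = 2 := by
  unfold switch; split_ifs <;> simp

theorem measurable_switch (α : ℝ) : Measurable (switch α) :=
  Measurable.ite (measurableSet_band α) measurable_const measurable_const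

theorem weights_eq_zero_or_two (α : ℝ) (i : Fin 4) (ω : Fin 4 → ℝ) :
    weights α ω i = 0 ∨ weights α ω i = 2 := by
  fin_cases i <;> rcases switch_eq_zero_or_two α (ω 0) with h0 | h0 <;>
    rcases switch_eq_zero_or_two α (ω 2) with h2 | h2 <;> simp [weights, h0, h2]

theorem sum_weights (α : ℝ) (ω : Fin 4 → ℝ) : ∑ i, weights α ω i = 4 := by
  simp [weights, Fin.sum_univ_four]; ring

theorem weights_eq_comp_eval (α : ℝ) (i : Fin 4) :
    ∃ j ≠ i, ∃ f : ℝ → ℝ, Measurable f ∧ (fun ω => weights α ω i) = f ∘ fun ω => ω j := by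
  have hs := measurable_switch α
  fin_cases i
  · exact ⟨2, by decide, switch α, hs, rfl⟩
  · exact ⟨2, by decide, fun x => 2 - switch α x, measurable_const.sub hs, rfl⟩
  · exact ⟨0, by decide, switch α, hs, rfl⟩
  · exact ⟨0, by decide, fun x => 2 - switch α x, measurable_const.sub hs, rfl⟩

theorem measurable_weights (α : ℝ) (i : Fin 4) : Measurable fun ω => weights α ω i := by
  obtain ⟨j, -, f, hf, hW⟩ := weights_eq_comp_eval α i
  rw [hW]
  exact hf.comp (measurable_pi_apply j)

theorem indepFun_eval_weights (μ : Fin 4 → Measure ℝ) [∀ i, IsProbabilityMeasure (μ i)]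
    (α : ℝ) (i : Fin 4) :
    IndepFun (fun ω : Fin 4 → ℝ => ω i) (fun ω => weights α ω i) (Measure.pi μ) := by
  obtain ⟨j, hji, f, hf, hW⟩ := weights_eq_comp_eval α i
  rw [hW]
  exact ((iIndepFun_eval_pi μ).indepFun hji.symm).comp measurable_id hf

def acceptanceRegion (α : ℝ) : Set (Fin 4 → ℝ) :=
  univ.pi ![band α, Ioi (α / 2), Ioi α, univ] ∪ univ.pi ![Ioi α, univ, band α, Ioi (α / 2)] ∪
    univ.pi ![(band α)ᶜ, Ioi α, (band α)ᶜ, Ioi (α / 2)] ∪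
    univ.pi ![(band α)ᶜ, Ioc (α / 2) α, (band α)ᶜ, Ioi α]

theorem exists_wBHRejects_weights_iff {α : ℝ} {ω : Fin 4 → ℝ} (hω : ∀ i, 0 < ω i) :
    (∃ i, wBHRejects 4 ω (weights α ω) α i) ↔ ω ∉ acceptanceRegion α := by
  have hW : ∀ t, weights α ω t = if t = (if ω 2 ∈ band α then 0 else 1) ∨
      t = (if ω 0 ∈ band α then 2 else 3) then ((4 : ℕ) : ℝ) / 2 else 0 := by
    intro t
    fin_cases t <;> by_cases h0 : ω 0 ∈ band α <;> by_cases h2 : ω 2 ∈ band α <;>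
      simp [weights, switch, h0, h2] <;> norm_num
  rw [exists_wBHRejects_iff_of_pair hω (by split_ifs <;> decide) hW]
  by_cases h0 : ω 0 ∈ band α <;> by_cases h2 : ω 2 ∈ band α <;>
    simp [acceptanceRegion, Fin.forall_fin_succ, h0, h2] <;>
    simp only [band, mem_Icc] at h0 h2 <;> grind

theorem measurableSet_acceptanceRegion (α : ℝ) : MeasurableSet (acceptanceRegion α) := by
  have hmeas := measurableSet_band α
  exact ((measurableSet_univ_pi_four hmeas measurableSet_Ioi measurableSet_Ioi .univ).union
    (measurableSet_univ_pi_four measurableSet_Ioi .univ hmeas measurableSet_Ioi)).union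
    (measurableSet_univ_pi_four hmeas.compl measurableSet_Ioi hmeas.compl measurableSet_Ioi)
    |>.union
    (measurableSet_univ_pi_four hmeas.compl measurableSet_Ioc hmeas.compl measurableSet_Ioi)

theorem measureReal_acceptanceRegion {α : ℝ} (hα0 : 0 ≤ α) (hα1 : α ≤ 1) :
    (Measure.pi fun _ : Fin 4 => uniform01).real (acceptanceRegion α) =
      (1 - α) * (1 - α ^ 2 / 4) := by
  have hband : uniform01.real (band α) = α / 2 := by
    rw [band, uniform01_real_Icc (by linarith) (by linarith) hα1]; ring
  have hband_compl : uniform01.real (band α)ᶜ = 1 - α / 2 := by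
    rw [probReal_compl_eq_one_sub (measurableSet_band α), hband]
  have hcompl : Disjoint (band α) (band α)ᶜ := disjoint_compl_right
  have hband_Ioi : Disjoint (band α) (Ioi α) :=
    (Iic_disjoint_Ioi le_rfl).mono_left Icc_subset_Iic_self
  have hmeas := measurableSet_band α
  rw [acceptanceRegion, measureReal_union ?disj₄ ?meas₄, measureReal_union ?disj₃ ?meas₃,
    measureReal_union ?disj₂ ?meas₂]
  case disj₄ =>
    exact disjoint_union_left.2 ⟨disjoint_union_left.2
      ⟨disjoint_univ_pi.2 ⟨0, hcompl⟩, disjoint_univ_pi.2 ⟨2, hcompl⟩⟩,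
      disjoint_univ_pi.2 ⟨1, Ioc_disjoint_Ioi_same.symm⟩⟩
  case disj₃ =>
    exact disjoint_union_left.2 ⟨disjoint_univ_pi.2 ⟨0, hcompl⟩, disjoint_univ_pi.2 ⟨2, hcompl⟩⟩
  case disj₂ => exact disjoint_univ_pi.2 ⟨0, hband_Ioi⟩
  case meas₄ =>
    exact measurableSet_univ_pi_four hmeas.compl measurableSet_Ioc hmeas.compl measurableSet_Ioi
  case meas₃ =>
    exact measurableSet_univ_pi_four hmeas.compl measurableSet_Ioi hmeas.compl measurableSet_Ioi
  case meas₂ => exact measurableSet_univ_pi_four measurableSet_Ioi .univ hmeas measurableSet_Ioi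
  simp only [measureReal_univ_pi, Fin.prod_univ_four, Matrix.cons_val_zero, Matrix.cons_val_one,
    Matrix.cons_val_two, Matrix.cons_val_three, Matrix.head_cons, Matrix.tail_cons, hband,
    hband_compl, uniform01_real_Ioi hα0 hα1, uniform01_real_Ioi (by linarith : 0 ≤ α / 2)
    (by linarith), uniform01_real_Ioc (by linarith : 0 ≤ α / 2) (by linarith) hα1, probReal_univ]
  ring

theorem measure_rejection {α : ℝ} (hα0 : 0 ≤ α) (hα1 : α ≤ 1) :
    Measure.pi (fun _ : Fin 4 => uniform01) {ω | ∃ i, wBHRejects 4 ω (weights α ω) α i} =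
      ENNReal.ofReal (α + α ^ 2 / 4 * (1 - α)) := by
  have hae : {ω | ∃ i, wBHRejects 4 ω (weights α ω) α i}
      =ᵐ[Measure.pi fun _ : Fin 4 => uniform01] ((acceptanceRegion α)ᶜ : Set (Fin 4 → ℝ)) := by
    filter_upwards [ae_pi_uniform01_pos] with ω hω
    exact propext (exists_wBHRejects_weights_iff hω)
  rw [measure_congr hae, ← ofReal_measureReal,
    probReal_compl_eq_one_sub (measurableSet_acceptanceRegion α),
    measureReal_acceptanceRegion hα0 hα1]
  congr 1
  ring

end WBHCounterexample

/-- **Counterexample: pairwise independence `P i ⊥ W i` does not suffice for FDR control.**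
For every `α ∈ (0,1)` there exist four i.i.d. uniform-`[0,1]` p-values `P 1, …, P 4`
(all true nulls) and weights `W i ∈ {0, 2}` summing to `4`, with each `P i` independent
of its own weight `W i`, such that the weighted BH procedure at level `α` rejects at
least one (null) hypothesis with probability exactly `α + (α²/4)(1 − α) > α`; since all
hypotheses are null, FWER = FDR = `α + (α²/4)(1 − α)`. -/
theorem weighted_bh_pairwise_independence_counterexample
    (α : ℝ) (hα : α ∈ Set.Ioo (0 : ℝ) 1) :
    ∃ (Ω : Type) (_ : MeasurableSpace Ω) (μ : Measure Ω) (_ : IsProbabilityMeasure μ)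
      (P W : Fin 4 → Ω → ℝ),
      (∀ i, Measurable (P i)) ∧ (∀ i, Measurable (W i)) ∧
      iIndepFun P μ ∧
      (∀ i, ∀ t ∈ Set.Icc (0 : ℝ) 1, μ {ω | P i ω ≤ t} = ENNReal.ofReal t) ∧
      (∀ i ω, W i ω = 0 ∨ W i ω = 2) ∧
      (∀ ω, ∑ i, W i ω = 4) ∧
      (∀ i, IndepFun (P i) (W i) μ) ∧
      μ {ω | ∃ i : Fin 4, wBHRejects 4 (fun j => P j ω) (fun j => W j ω) α i}
        = ENNReal.ofReal (α + α ^ 2 / 4 * (1 - α)) ∧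
      α < α + α ^ 2 / 4 * (1 - α) := by
  obtain ⟨hα0, hα1⟩ := hα
  refine ⟨Fin 4 → ℝ, inferInstance, Measure.pi fun _ => uniform01, inferInstance,
    fun i ω => ω i, fun i ω => WBHCounterexample.weights α ω i, measurable_pi_apply,
    WBHCounterexample.measurable_weights α, iIndepFun_eval_pi _,
    fun i t ht => pi_uniform01_eval_le i ht.2,
    WBHCounterexample.weights_eq_zero_or_two α,
    WBHCounterexample.sum_weights α, WBHCounterexample.indepFun_eval_weights _ α,
    WBHCounterexample.measure_rejection hα0.le hα1.le, ?_⟩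
  have : 0 < α ^ 2 / 4 * (1 - α) := by have := sub_pos.2 hα1; positivity
  linarith
end

section
/- In the IHWc procedure with censoring level τ: for any index i, if hypothesis i is rejected then P_i ≤ (αW_i·k̂/m) ∧ τ, and the number of rejections k̂ equals k_i, the number of rejections when P_i is replaced by 0; in particular rejection of i implies P_i ≤ (αW_i·k_i/m) ∧ τ. -/
open MeasureTheory Classical

/-- Censoring of p-values at level `τ`: p-values `≤ τ` are replaced by `0`. -/
noncomputable def censor (m : ℕ) (τ : ℝ) (P : Fin m → ℝ) : Fin m → ℝ :=
  fun j => if τ < P j then P j else 0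

/-- The number of rejections of the censored weighted BH procedure (IHWc) at level `α`
with censoring level `τ`:
`k* = max {k : at least k p-values satisfy P i ≤ (α W i k / m) ∧ τ}`. -/
noncomputable def cBHRejCount (m : ℕ) (P W : Fin m → ℝ) (α τ : ℝ) : ℕ :=
  sSup {k : ℕ |
    k ≤ (Finset.univ.filter (fun i : Fin m => P i ≤ min (α * W i * k / m) τ)).card}

/-! Replacing a rejected `P i` by `0` does not change the censored weights, since `P i ≤ τ`
is censored to `0` either way. With the weights fixed, lowering `P i` can only enlarge the
rejection count, and conversely `P i` still lies below its threshold at the new count, so the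
self-consistency condition defining the old count holds at the new one. -/

open Finset

noncomputable def cBHRejSet (m : ℕ) (P W : Fin m → ℝ) (α τ : ℝ) (k : ℕ) : Finset (Fin m) :=
  univ.filter fun j => P j ≤ min (α * W j * k / m) τ

section RejCount

variable {m : ℕ} {P Q W : Fin m → ℝ} {α τ : ℝ}

lemma bddAbove_cBHRejCount_set :
    BddAbove {k : ℕ | k ≤ #(cBHRejSet m P W α τ k)} :=
  ⟨m, fun _ hk => hk.trans ((card_le_univ _).trans_eq (Fintype.card_fin m))⟩

lemma cBHRejCount_le_card_cBHRejSet :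
    cBHRejCount m P W α τ ≤ #(cBHRejSet m P W α τ (cBHRejCount m P W α τ)) :=
  Nat.sSup_mem (s := {k | k ≤ #(cBHRejSet m P W α τ k)}) ⟨0, Nat.zero_le _⟩
    bddAbove_cBHRejCount_set

lemma le_cBHRejCount {k : ℕ} (h : k ≤ #(cBHRejSet m P W α τ k)) :
    k ≤ cBHRejCount m P W α τ :=
  le_csSup bddAbove_cBHRejCount_set h

lemma cBHRejCount_le_of_forall_imp
    (h : ∀ j, P j ≤ min (α * W j * cBHRejCount m P W α τ / m) τ →
      Q j ≤ min (α * W j * cBHRejCount m P W α τ / m) τ) :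
    cBHRejCount m P W α τ ≤ cBHRejCount m Q W α τ :=
  le_cBHRejCount <| cBHRejCount_le_card_cBHRejSet.trans <| card_le_card fun j hj => by
    simp only [cBHRejSet, mem_filter, mem_univ, true_and] at hj ⊢
    exact h j hj

lemma cBHThreshold_nonneg (hα : 0 ≤ α) (hτ : 0 ≤ τ) {j : Fin m} (hW : 0 ≤ W j) (k : ℕ) :
    0 ≤ min (α * W j * k / m) τ :=
  le_min (by positivity) hτ

lemma cBHThreshold_mono (hα : 0 ≤ α) {j : Fin m} (hW : 0 ≤ W j) {k l : ℕ} (hkl : k ≤ l) :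
    min (α * W j * k / m) τ ≤ min (α * W j * l / m) τ := by
  gcongr

lemma one_le_cBHRejCount (hα : 0 ≤ α) (hτ : 0 ≤ τ) (hW : ∀ j, 0 ≤ W j) {i : Fin m}
    (hrej : P i ≤ min (α * W i * cBHRejCount m P W α τ / m) τ) :
    1 ≤ cBHRejCount m P W α τ := by
  rw [Nat.one_le_iff_ne_zero]
  intro hzero
  have hPi : P i ≤ 0 := by simpa [hzero] using (le_min_iff.mp hrej).1
  have hi : i ∈ cBHRejSet m P W α τ 1 := by
    simp only [cBHRejSet, mem_filter, mem_univ, true_and]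
    exact hPi.trans (cBHThreshold_nonneg hα hτ (hW i) 1)
  have := le_cBHRejCount (card_pos.mpr ⟨i, hi⟩)
  omega

lemma cBHRejCount_update_zero (hα : 0 ≤ α) (hτ : 0 ≤ τ) (hW : ∀ j, 0 ≤ W j) {i : Fin m}
    (hrej : P i ≤ min (α * W i * cBHRejCount m P W α τ / m) τ) :
    cBHRejCount m P W α τ = cBHRejCount m (Function.update P i 0) W α τ := by
  have hle : cBHRejCount m P W α τ ≤ cBHRejCount m (Function.update P i 0) W α τ := by
    refine cBHRejCount_le_of_forall_imp fun j hj => ?_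
    rcases eq_or_ne j i with rfl | hji
    · simpa using cBHThreshold_nonneg hα hτ (hW j) _
    · rwa [Function.update_of_ne hji]
  refine le_antisymm hle (cBHRejCount_le_of_forall_imp fun j hj => ?_)
  rcases eq_or_ne j i with rfl | hji
  · exact hrej.trans (cBHThreshold_mono hα (hW j) hle)
  · rwa [Function.update_of_ne hji] at hj

end RejCount

lemma censor_update_zero {m : ℕ} {τ : ℝ} (hτ : 0 ≤ τ) {P : Fin m → ℝ} {i : Fin m}
    (hPi : P i ≤ τ) : censor m τ (Function.update P i 0) = censor m τ P := by
  funext j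
  rcases eq_or_ne j i with rfl | hji
  · simp [censor, not_lt.mpr hτ, not_lt.mpr hPi]
  · simp [censor, Function.update_of_ne hji]

theorem ihwc_leave_one_out_stability_general
    (m : ℕ) (α τ : ℝ) (hα : 0 < α) (hτ : 0 < τ)
    (P : Fin m → ℝ)
    (w : (Fin m → ℝ) → Fin m → ℝ) (hwnonneg : ∀ p j, 0 ≤ w p j)
    (i : Fin m)
    -- `i` is rejected by IHWc with weights `W = w (censored P)`
    (hrej : P i ≤ min
      (α * w (censor m τ P) i *
        (cBHRejCount m P (w (censor m τ P)) α τ : ℝ) / m) τ) :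
    cBHRejCount m P (w (censor m τ P)) α τ
      = cBHRejCount m (Function.update P i 0)
          (w (censor m τ (Function.update P i 0))) α τ ∧
    1 ≤ cBHRejCount m (Function.update P i 0)
          (w (censor m τ (Function.update P i 0))) α τ ∧
    P i ≤ min
      (α * w (censor m τ P) i *
        (cBHRejCount m (Function.update P i 0)
          (w (censor m τ (Function.update P i 0))) α τ : ℝ) / m) τ := by
  rw [censor_update_zero hτ.le (le_min_iff.mp hrej).2]
  have hW := hwnonneg (censor m τ P)
  have hk := cBHRejCount_update_zero hα.le hτ.le hW hrej
  exact ⟨hk, hk ▸ one_le_cBHRejCount hα.le hτ.le hW hrej, hk ▸ hrej⟩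

/-- **IHWc leave-one-out stability (key step in the proof of Theorem 2).**
In the IHWc procedure — weights given by a function `w` of the censored p-values, and
the censored weighted BH rejection rule — if hypothesis `i` is rejected, then
`P i ≤ (α W i k̂ / m) ∧ τ`, the rejection count `k̂` is unchanged (and at least `1`) when
`P i` is replaced by `0`, and in particular `P i ≤ (α W i k_i / m) ∧ τ` where `k_i` is
the rejection count with `P i` replaced by `0`. -/
theorem ihwc_leave_one_out_stability
    (m : ℕ) (hm : 0 < m) (α τ : ℝ) (hα : 0 < α) (hτ : 0 < τ)
    (P : Fin m → ℝ) (hPnonneg : ∀ j, 0 ≤ P j)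
    (w : (Fin m → ℝ) → Fin m → ℝ) (hwnonneg : ∀ p j, 0 ≤ w p j)
    (i : Fin m)
    -- `i` is rejected by IHWc with weights `W = w (censored P)`
    (hrej : P i ≤ min
      (α * w (censor m τ P) i *
        (cBHRejCount m P (w (censor m τ P)) α τ : ℝ) / m) τ) :
    cBHRejCount m P (w (censor m τ P)) α τ
      = cBHRejCount m (Function.update P i 0)
          (w (censor m τ (Function.update P i 0))) α τ ∧
    1 ≤ cBHRejCount m (Function.update P i 0)
          (w (censor m τ (Function.update P i 0))) α τ ∧
    P i ≤ min
      (α * w (censor m τ P) i *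
        (cBHRejCount m (Function.update P i 0)
          (w (censor m τ (Function.update P i 0))) α τ : ℝ) / m) τ :=
  ihwc_leave_one_out_stability_general m α τ hα hτ P w hwnonneg i hrej
end

section
/- Let P be super-uniform with P[P ≤ τ] > 0, independent of (k, W, indicator events) conditionally structured as in IHWc, with W ≥ 0 and k a positive-integer random variable. Then E[ 1{P ≤ (αWk/m) ∧ τ} / (k ∨ 1) | P ≤ τ, W, k ] ≤ αW / (m·P[P ≤ τ]). -/
/-!
Write `Y = (W, k)` and `s = {P ≤ τ}`. The integrand vanishes off `s`, so on every event
`{Y ∈ B}` its integral under `μ[|s]` is `μ(s)⁻¹` times its `μ`-integral over `{Y ∈ B} ∩ s`.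
Since `P` is independent of `Y`, that integral is obtained by first integrating out `P` for a
fixed value `y = (w, j)`, which gives at most `P[P ≤ t] / j ≤ t / j ≤ α w / m` with
`t = (α w j / m) ∧ τ` by super-uniformity; and `α w / m` is exactly what the bound
`α w / (m P[P ≤ τ])` integrates to over `s`. The comparison is made with lower integrals,
so that no integrability of the unbounded bound is needed.
-/

open MeasureTheory ProbabilityTheory ENNReal Set

theorem condExp_ae_le_of_forall_setLIntegral_le {Ω : Type*} {m mΩ : MeasurableSpace Ω}
    {ν : Measure Ω} (hm : m ≤ mΩ) [SigmaFinite (ν.trim hm)] {f g : Ω → ℝ}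
    (hf : Integrable f ν) (hf₀ : 0 ≤ᵐ[ν] f) (hg : Measurable[m] g) (hg₀ : 0 ≤ g)
    (h : ∀ A, MeasurableSet[m] A →
      ∫⁻ ω in A, ENNReal.ofReal (f ω) ∂ν ≤ ∫⁻ ω in A, ENNReal.ofReal (g ω) ∂ν) :
    ν[f|m] ≤ᵐ[ν] g := by
  have hle :
      (fun ω ↦ ENNReal.ofReal (ν[f|m] ω)) ≤ᵐ[ν.trim hm] fun ω ↦ ENNReal.ofReal (g ω) := by
    refine ae_le_of_forall_setLIntegral_le_of_sigmaFinite
      stronglyMeasurable_condExp.measurable.ennreal_ofReal fun A hA _ ↦ ?_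
    rw [setLIntegral_trim hm stronglyMeasurable_condExp.measurable.ennreal_ofReal hA,
      setLIntegral_trim hm hg.ennreal_ofReal hA,
      ← ofReal_integral_eq_lintegral_ofReal integrable_condExp.integrableOn
        (ae_restrict_of_ae (condExp_nonneg hf₀)),
      setIntegral_condExp hm hf hA,
      ofReal_integral_eq_lintegral_ofReal hf.integrableOn (ae_restrict_of_ae hf₀)]
    exact h A hA
  filter_upwards [ae_of_ae_trim hm hle] with ω hω
  exact (ENNReal.ofReal_le_ofReal_iff (hg₀ ω)).1 hω

namespace ProbabilityTheory

variable {Ω α β : Type*} {mΩ : MeasurableSpace Ω} [MeasurableSpace α] [MeasurableSpace β]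
  {μ : Measure Ω} {X : Ω → α} {Y : Ω → β}

theorem IndepFun.lintegral_comp_eq [IsFiniteMeasure μ] (hXY : IndepFun X Y μ)
    (hX : Measurable X) (hY : Measurable Y) {Φ : α × β → ℝ≥0∞} (hΦ : Measurable Φ) :
    ∫⁻ ω, Φ (X ω, Y ω) ∂μ = ∫⁻ y, ∫⁻ x, Φ (x, y) ∂μ.map X ∂μ.map Y := by
  rw [← lintegral_map hΦ (hX.prodMk hY),
    (indepFun_iff_map_prod_eq_prod_map_map hX.aemeasurable hY.aemeasurable).1 hXY,
    lintegral_prod_symm' _ hΦ]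

theorem setLIntegral_cond_preimage (hX : Measurable X) (hY : Measurable Y) {S : Set α}
    (hS : MeasurableSet S) {B : Set β} (hB : MeasurableSet B) (Φ : α × β → ℝ≥0∞) :
    ∫⁻ ω in Y ⁻¹' B, Φ (X ω, Y ω) ∂μ[|X ⁻¹' S]
      = (μ (X ⁻¹' S))⁻¹ * ∫⁻ ω, (S ×ˢ B).indicator Φ (X ω, Y ω) ∂μ := by
  have hSB : MeasurableSet ((fun ω ↦ (X ω, Y ω)) ⁻¹' (S ×ˢ B)) := (hX.prodMk hY) (hS.prod hB)
  rw [ProbabilityTheory.cond, Measure.restrict_smul, lintegral_smul_measure,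
    Measure.restrict_restrict (hY hB), inter_comm, ← mk_preimage_prod,
    ← lintegral_indicator hSB, smul_eq_mul]
  simp_rw [← indicator_comp_right]
  rfl

theorem IndepFun.setLIntegral_cond_le [IsFiniteMeasure μ] (hXY : IndepFun X Y μ)
    (hX : Measurable X) (hY : Measurable Y) {S : Set α} (hS : MeasurableSet S)
    {Φ Ψ : α × β → ℝ≥0∞} (hΦ : Measurable Φ) (hΨ : Measurable Ψ)
    (h : ∀ᵐ y ∂μ.map Y, ∫⁻ x in S, Φ (x, y) ∂μ.map X ≤ ∫⁻ x in S, Ψ (x, y) ∂μ.map X)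
    {B : Set β} (hB : MeasurableSet B) :
    ∫⁻ ω in Y ⁻¹' B, Φ (X ω, Y ω) ∂μ[|X ⁻¹' S]
      ≤ ∫⁻ ω in Y ⁻¹' B, Ψ (X ω, Y ω) ∂μ[|X ⁻¹' S] := by
  rw [setLIntegral_cond_preimage hX hY hS hB, setLIntegral_cond_preimage hX hY hS hB,
    hXY.lintegral_comp_eq hX hY (hΦ.indicator (hS.prod hB)),
    hXY.lintegral_comp_eq hX hY (hΨ.indicator (hS.prod hB))]
  gcongr _ * ?_
  refine lintegral_mono_ae ?_
  filter_upwards [h] with y hy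
  by_cases hyB : y ∈ B
  · have hslice : ∀ Θ : α × β → ℝ≥0∞,
        (fun x ↦ (S ×ˢ B).indicator Θ (x, y)) = S.indicator fun x ↦ Θ (x, y) := by
      intro Θ
      ext x
      by_cases hx : x ∈ S <;> simp [hx, hyB]
    simpa only [hslice, lintegral_indicator hS] using hy
  · simp [hyB]

end ProbabilityTheory

theorem setLIntegral_ofReal_div_measure_toReal {α : Type*} [MeasurableSpace α] {ν : Measure α}
    [IsFiniteMeasure ν] {S : Set α} (hS : ν S ≠ 0) {a : ℝ} (ha : 0 ≤ a) :
    ∫⁻ _ in S, ENNReal.ofReal (a / (ν S).toReal) ∂ν = ENNReal.ofReal a := by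
  have hS' : (ν S).toReal ≠ 0 := (ENNReal.toReal_pos hS (measure_ne_top ν S)).ne'
  rw [setLIntegral_const]
  nth_rw 2 [← ENNReal.ofReal_toReal (measure_ne_top ν S)]
  rw [← ENNReal.ofReal_mul (by positivity), div_mul_cancel₀ a hS']

theorem lintegral_ite_div_le_of_measure_Iic_le {ν : Measure ℝ} {t a : ℝ}
    (hν : ν (Iic t) ≤ ENNReal.ofReal t) (ha : 0 ≤ a) (j : ℕ) (hta : t ≤ a * j) :
    ∫⁻ p, ENNReal.ofReal ((if p ≤ t then 1 else 0) / (max j 1 : ℕ)) ∂ν ≤ ENNReal.ofReal a := by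
  have hj : (0 : ℝ) < (max j 1 : ℕ) := by positivity
  have ht : t / (max j 1 : ℕ) ≤ a := by
    rw [div_le_iff₀ hj]
    exact hta.trans (mul_le_mul_of_nonneg_left (by exact_mod_cast le_max_left j 1) ha)
  calc ∫⁻ p, ENNReal.ofReal ((if p ≤ t then 1 else 0) / (max j 1 : ℕ)) ∂ν
      = ∫⁻ p, (Iic t).indicator (fun _ ↦ ENNReal.ofReal (1 / (max j 1 : ℕ))) p ∂ν := by
        congr with p
        by_cases hp : p ≤ t <;> simp [hp]
    _ = ENNReal.ofReal (1 / (max j 1 : ℕ)) * ν (Iic t) :=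
        lintegral_indicator_const measurableSet_Iic _
    _ ≤ ENNReal.ofReal (1 / (max j 1 : ℕ)) * ENNReal.ofReal t := by gcongr
    _ ≤ ENNReal.ofReal a := by
        rw [← ENNReal.ofReal_mul (by positivity), one_div_mul_eq_div]
        exact ENNReal.ofReal_le_ofReal ht

/-- The contribution to the false discovery proportion of a null hypothesis with p-value `p` and
weight `w` when `j` hypotheses are rejected; here `z = (p, w, j)`. -/
noncomputable def fdpShare (α τ : ℝ) (m : ℕ) (z : ℝ × ℝ × ℕ) : ℝ :=
  (if z.1 ≤ min (α * z.2.1 * z.2.2 / m) τ then 1 else 0) / (max z.2.2 1 : ℕ)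

section fdpShare

variable {α τ : ℝ} {m : ℕ}

theorem measurable_fdpShare : Measurable (fdpShare α τ m) := by
  unfold fdpShare
  refine Measurable.div (Measurable.ite (measurableSet_le ?_ ?_) ?_ ?_) ?_ <;> fun_prop

theorem fdpShare_nonneg (z : ℝ × ℝ × ℕ) : 0 ≤ fdpShare α τ m z :=
  div_nonneg (by split_ifs <;> norm_num) (by positivity)

theorem fdpShare_le_one (z : ℝ × ℝ × ℕ) : fdpShare α τ m z ≤ 1 := by
  have hj : (1 : ℝ) ≤ (max z.2.2 1 : ℕ) := by exact_mod_cast le_max_right _ _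
  exact div_le_one_of_le₀ (by split_ifs <;> linarith) (by positivity)

theorem lintegral_fdpShare_le {ν : Measure ℝ}
    (hν : ∀ t ∈ Icc (0 : ℝ) 1, ν (Iic t) ≤ ENNReal.ofReal t) (hα : 0 ≤ α) (hτ : τ ∈ Icc 0 1)
    {w : ℝ} (hw : 0 ≤ w) (j : ℕ) :
    ∫⁻ p, ENNReal.ofReal (fdpShare α τ m (p, w, j)) ∂ν ≤ ENNReal.ofReal (α * w / m) := by
  have ht : 0 ≤ min (α * w * j / m) τ := le_min (by positivity) hτ.1
  exact lintegral_ite_div_le_of_measure_Iic_le (hν _ ⟨ht, (min_le_right _ _).trans hτ.2⟩)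
    (by positivity) j ((min_le_left _ _).trans_eq (by ring))

end fdpShare

theorem ihwc_conditional_bound_general
    {Ω : Type*} [mΩ : MeasurableSpace Ω] (μ : Measure Ω) [IsProbabilityMeasure μ]
    (P W : Ω → ℝ) (k : Ω → ℕ)
    (hPmeas : Measurable P) (hWmeas : Measurable W) (hkmeas : Measurable k)
    (hsuper : ∀ t ∈ Set.Icc (0 : ℝ) 1, μ {ω | P ω ≤ t} ≤ ENNReal.ofReal t)
    (hindep : IndepFun P (fun ω => (W ω, k ω)) μ)
    (hWnonneg : ∀ ω, 0 ≤ W ω)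
    (m : ℕ)
    (α τ : ℝ) (hα : α ∈ Set.Ioo (0 : ℝ) 1) (hτ : τ ∈ Set.Ioo (0 : ℝ) 1)
    (hpos : 0 < μ {ω | P ω ≤ τ}) :
    MeasureTheory.condExp
        (MeasurableSpace.comap (fun ω => (W ω, k ω)) inferInstance)
        (ProbabilityTheory.cond μ {ω | P ω ≤ τ})
        (fun ω => (if P ω ≤ min (α * W ω * k ω / m) τ then (1 : ℝ) else 0)
          / (max (k ω) 1 : ℕ))
      ≤ᵐ[ProbabilityTheory.cond μ {ω | P ω ≤ τ}]
        fun ω => α * W ω / (m * (μ {ω' | P ω' ≤ τ}).toReal) := by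
  set Y : Ω → ℝ × ℕ := fun ω ↦ (W ω, k ω)
  have hY : Measurable Y := hWmeas.prodMk hkmeas
  have hlaw : ∀ t, (μ.map P) (Iic t) = μ {ω | P ω ≤ t} := fun t ↦
    Measure.map_apply hPmeas measurableSet_Iic
  have : IsProbabilityMeasure μ[|{ω | P ω ≤ τ}] := cond_isProbabilityMeasure hpos.ne'
  have hW : ∀ᵐ y ∂μ.map Y, 0 ≤ y.1 :=
    (ae_map_iff hY.aemeasurable (measurableSet_le measurable_const measurable_fst)).2
      (ae_of_all _ hWnonneg)
  refine condExp_ae_le_of_forall_setLIntegral_le hY.comap_le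
    (f := fun ω ↦ fdpShare α τ m (P ω, Y ω))
    (Integrable.of_bound (measurable_fdpShare.comp (hPmeas.prodMk hY)).aestronglyMeasurable 1
      (ae_of_all _ fun ω ↦ by simpa [abs_of_nonneg (fdpShare_nonneg _)] using fdpShare_le_one _))
    (ae_of_all _ fun ω ↦ fdpShare_nonneg _)
    (Measurable.comp (g := fun y : ℝ × ℕ ↦ α * y.1 / _) (by fun_prop) (comap_measurable Y))
    (fun ω ↦ by have := hα.1; have := hWnonneg ω; positivity) ?_
  rintro _ ⟨B, hB, rfl⟩
  refine hindep.setLIntegral_cond_le hPmeas hY measurableSet_Iic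
    measurable_fdpShare.ennreal_ofReal (Ψ := fun z ↦ ENNReal.ofReal (α * z.2.1 / (m * _)))
    (by fun_prop) ?_ hB
  filter_upwards [hW] with y hy
  rw [← div_div, ← hlaw, setLIntegral_ofReal_div_measure_toReal ((hlaw τ).trans_ne hpos.ne')
    (by have := hα.1; positivity)]
  exact (setLIntegral_le_lintegral _ _).trans (lintegral_fdpShare_le (fun t ht ↦
    (hlaw t).trans_le (hsuper t ht)) hα.1.le (Ioo_subset_Icc_self hτ) hy y.2)

/-- **Key conditional bound in the IHWc proof.**
Let `P` be super-uniform with `P[P ≤ τ] > 0`, independent of the pair `(W, k)` (which is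
a function of data independent of `P`), where `W ≥ 0` and `k ≥ 1` is an integer random
variable. Then, conditionally on the event `{P ≤ τ}` and on `(W, k)`,
`E[ 1{P ≤ (αWk/m) ∧ τ} / (k ∨ 1) | P ≤ τ, W, k ] ≤ αW / (m·P[P ≤ τ])`. -/
theorem ihwc_conditional_bound
    {Ω : Type*} [mΩ : MeasurableSpace Ω] (μ : Measure Ω) [IsProbabilityMeasure μ]
    (P W : Ω → ℝ) (k : Ω → ℕ)
    (hPmeas : Measurable P) (hWmeas : Measurable W) (hkmeas : Measurable k)
    (hsuper : ∀ t ∈ Set.Icc (0 : ℝ) 1, μ {ω | P ω ≤ t} ≤ ENNReal.ofReal t)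
    (hindep : IndepFun P (fun ω => (W ω, k ω)) μ)
    (hWnonneg : ∀ ω, 0 ≤ W ω) (hk : ∀ ω, 1 ≤ k ω)
    (m : ℕ) (hm : 0 < m)
    (α τ : ℝ) (hα : α ∈ Set.Ioo (0 : ℝ) 1) (hτ : τ ∈ Set.Ioo (0 : ℝ) 1)
    (hpos : 0 < μ {ω | P ω ≤ τ}) :
    MeasureTheory.condExp
        (MeasurableSpace.comap (fun ω => (W ω, k ω)) inferInstance)
        (ProbabilityTheory.cond μ {ω | P ω ≤ τ})
        (fun ω => (if P ω ≤ min (α * W ω * k ω / m) τ then (1 : ℝ) else 0)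
          / (max (k ω) 1 : ℕ))
      ≤ᵐ[ProbabilityTheory.cond μ {ω | P ω ≤ τ}]
        fun ω => α * W ω / (m * (μ {ω' | P ω' ≤ τ}).toReal) :=
  ihwc_conditional_bound_general (mΩ := mΩ) μ P W k hPmeas hWmeas hkmeas hsuper hindep hWnonneg m α
    τ hα hτ hpos
end

section
/- Inverse Binomial Lemma: let P_1,...,P_n be independent super-uniform random variables, c_1,...,c_n ≥ 0 deterministic constants with c_max = max_j c_j, and τ' ∈ (0,1). Then E[ 1 / ( c_max + Σ_{j≠i} c_j 1{P_j > τ'} ) ] ≤ 1 / ( (1−τ') Σ_j c_j ) for each i (assuming Σ_j c_j > 0). -/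
/-!
The indicators `ξ j = 1{P j > τ'}` are independent Bernoulli variables with success
probabilities `p j ≥ p := 1 - τ'` (super-uniformity). Since `x⁻¹ = ∫₀¹ t ^ (x - 1) dt`, the
expectation equals `∫₀¹ t ^ (M - 1) ∏_{j ≠ i} (p j t ^ c j + 1 - p j) dt`, and each factor
grows when `p j` is lowered to `p`. For `Φ t = (p t ^ M + 1 - p) ∏_{j ≠ i} (p t ^ c j + 1 - p)`,
the bounds `c j ≤ M` make `p (M + ∑_{j ≠ i} c j)` times the new integrand at most `Φ'` on
`(0, 1)`, so the integral is at most `(Φ 1 - Φ 0) / (p (M + ∑_{j ≠ i} c j)) ≤ 1 / (p ∑_j c j)`,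
using `c i ≤ M`.
-/

open MeasureTheory ProbabilityTheory Finset Set

theorem integral_comp_eq_sum_measureReal {Ω α : Type*} [MeasurableSpace Ω] {μ : Measure Ω}
    [IsFiniteMeasure μ] [DecidableEq α] {R : Ω → α} {s : Finset α} (hRs : ∀ ω, R ω ∈ s)
    (hR : ∀ a ∈ s, MeasurableSet {ω | R ω = a}) (F : α → ℝ) :
    ∫ ω, F (R ω) ∂μ = ∑ a ∈ s, μ.real {ω | R ω = a} * F a := by
  have hF : ∀ ω, F (R ω) = ∑ a ∈ s, {ω | R ω = a}.indicator (fun _ => F a) ω := fun ω => by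
    simp only [Set.indicator_apply, Set.mem_ofPred_eq, sum_ite_eq, if_pos (hRs ω)]
  simp_rw [hF]
  rw [integral_finsetSum _ fun a ha => (integrable_const _).indicator (hR a ha)]
  exact sum_congr rfl fun a ha => integral_indicator_const _ (hR a ha)

section IndependentEvents

variable {Ω ι : Type*} [DecidableEq ι] {β : ι → Type*} {X : ∀ j, Ω → β j}
  {B : ∀ j, Set (β j)} [∀ j, DecidablePred (· ∈ B j)]

theorem setOf_filter_mem_preimage_eq {s S : Finset ι} (hS : S ⊆ s) :
    {ω | {j ∈ s | X j ω ∈ B j} = S} = ⋂ j ∈ s, X j ⁻¹' (if j ∈ S then B j else (B j)ᶜ) := by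
  ext ω
  simp only [Set.mem_ofPred_eq, Set.mem_iInter, Set.mem_preimage, Finset.ext_iff,
    Finset.mem_filter]
  refine ⟨fun h j hj => ?_, fun h j => ?_⟩
  · split_ifs with hjS
    · exact ((h j).2 hjS).2
    · exact fun hjB => hjS ((h j).1 ⟨hj, hjB⟩)
  · by_cases hjS : j ∈ S
    · simpa [hjS, hS hjS] using h j (hS hjS)
    · simp only [hjS, iff_false, not_and]
      exact fun hj => by simpa [hjS] using h j hj

variable [MeasurableSpace Ω] {μ : Measure Ω} [IsProbabilityMeasure μ]
  [∀ j, MeasurableSpace (β j)]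

theorem measureReal_filter_mem_preimage_eq (hX : iIndepFun X μ) (hXm : ∀ j, Measurable (X j))
    (hB : ∀ j, MeasurableSet (B j)) {s S : Finset ι} (hS : S ⊆ s) :
    μ.real {ω | {j ∈ s | X j ω ∈ B j} = S}
      = (∏ j ∈ S, μ.real (X j ⁻¹' B j)) * ∏ j ∈ s \ S, (1 - μ.real (X j ⁻¹' B j)) := by
  have hmeas : ∀ j ∈ s, MeasurableSet (if j ∈ S then B j else (B j)ᶜ) := fun j _ => by
    split_ifs <;> simp [hB j]
  rw [measureReal_def, setOf_filter_mem_preimage_eq hS,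
    hX.measure_inter_preimage_eq_mul s hmeas, ENNReal.toReal_prod]
  simp only [← measureReal_def, apply_ite (fun A => μ.real (X _ ⁻¹' A))]
  rw [prod_ite, filter_mem_eq_inter, Finset.inter_eq_right.mpr hS, ← sdiff_eq_filter]
  congr 1
  refine prod_congr rfl fun j _ => ?_
  rw [Set.preimage_compl, probReal_compl_eq_one_sub (hXm j (hB j))]

theorem integral_comp_filter_mem_preimage (hX : iIndepFun X μ) (hXm : ∀ j, Measurable (X j))
    (hB : ∀ j, MeasurableSet (B j)) (s : Finset ι) (F : Finset ι → ℝ) :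
    ∫ ω, F {j ∈ s | X j ω ∈ B j} ∂μ = ∑ S ∈ s.powerset,
      ((∏ j ∈ S, μ.real (X j ⁻¹' B j)) * ∏ j ∈ s \ S, (1 - μ.real (X j ⁻¹' B j))) * F S := by
  have hmeas : ∀ S ∈ s.powerset, MeasurableSet {ω | {j ∈ s | X j ω ∈ B j} = S} := by
    intro S hS
    rw [setOf_filter_mem_preimage_eq (mem_powerset.mp hS)]
    exact Finset.measurableSet_biInter s fun j _ => hXm j (by split_ifs <;> simp [hB j])
  rw [integral_comp_eq_sum_measureReal (fun ω => mem_powerset.mpr (filter_subset _ s)) hmeas]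
  exact sum_congr rfl fun S hS => by
    rw [measureReal_filter_mem_preimage_eq hX hXm hB (mem_powerset.mp hS)]

theorem one_sub_le_measureReal_preimage_Ioi {Ω : Type*} [MeasurableSpace Ω] {μ : Measure Ω}
    [IsProbabilityMeasure μ] {X : Ω → ℝ} (hX : Measurable X) {τ : ℝ} (hτ : 0 ≤ τ)
    (hXτ : μ {ω | X ω ≤ τ} ≤ ENNReal.ofReal τ) :
    1 - τ ≤ μ.real (X ⁻¹' Ioi τ) := by
  have hle : μ.real (X ⁻¹' Iic τ) ≤ τ := ENNReal.toReal_le_of_le_ofReal hτ hXτ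
  rw [← compl_Iic, Set.preimage_compl, probReal_compl_eq_one_sub (hX measurableSet_Iic)]
  linarith

end IndependentEvents

/-- `E[t ^ (c * ξ)]` for `ξ` a Bernoulli variable with success probability `p`. -/
noncomputable def bernoulliPGF (p c t : ℝ) : ℝ := p * t ^ c + (1 - p)

namespace bernoulliPGF

variable {p c t : ℝ}

theorem continuous (hc : 0 ≤ c) : Continuous (bernoulliPGF p c) :=
  (continuous_const.mul (Real.continuous_rpow_const hc)).add continuous_const

theorem hasDerivAt (ht : t ≠ 0) : HasDerivAt (bernoulliPGF p c) (p * (c * t ^ (c - 1))) t :=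
  ((Real.hasDerivAt_rpow_const (Or.inl ht)).const_mul p).add_const _

@[simp] theorem apply_one : bernoulliPGF p c 1 = 1 := by simp [bernoulliPGF]

theorem nonneg (hp0 : 0 ≤ p) (hp1 : p ≤ 1) (ht : 0 ≤ t) : 0 ≤ bernoulliPGF p c t := by
  unfold bernoulliPGF
  have := Real.rpow_nonneg ht c
  nlinarith

theorem antitone_prob (hc : 0 ≤ c) (ht0 : 0 ≤ t) (ht1 : t ≤ 1) :
    Antitone fun p => bernoulliPGF p c t := fun p p' hpp' => by
  have := Real.rpow_le_one ht0 ht1 hc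
  simp only [bernoulliPGF]
  nlinarith

theorem rpow_sub_one_mul_le {M : ℝ} (hp1 : p ≤ 1) (hcM : c ≤ M) (ht0 : 0 < t) (ht1 : t ≤ 1) :
    t ^ (M - 1) * bernoulliPGF p c t ≤ t ^ (c - 1) * bernoulliPGF p M t := by
  have hexp : t ^ (M - 1) * t ^ c = t ^ (c - 1) * t ^ M := by
    rw [← Real.rpow_add ht0, ← Real.rpow_add ht0]; ring_nf
  have hmono : t ^ (M - 1) ≤ t ^ (c - 1) :=
    Real.rpow_le_rpow_of_exponent_ge ht0 ht1 (by linarith)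
  unfold bernoulliPGF
  nlinarith

end bernoulliPGF

theorem setIntegral_Ioc_rpow_sub_one {a : ℝ} (ha : 0 < a) :
    ∫ t in Ioc (0 : ℝ) 1, t ^ (a - 1) = a⁻¹ := by
  rw [← intervalIntegral.integral_of_le zero_le_one, integral_rpow (Or.inl (by linarith)),
    sub_add_cancel, Real.one_rpow, Real.zero_rpow ha.ne', sub_zero, one_div]

theorem integrableOn_Ioc_rpow_mul {r : ℝ} (hr : -1 < r) {g : ℝ → ℝ} (hg : Continuous g) :
    IntegrableOn (fun t => t ^ r * g t) (Ioc 0 1) :=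
  (intervalIntegrable_iff_integrableOn_Ioc_of_le zero_le_one).mp
    ((intervalIntegral.intervalIntegrable_rpow' hr).mul_continuousOn hg.continuousOn)

section GeneratingFunction

variable {ι : Type*} {s : Finset ι} {c : ι → ℝ}

theorem continuous_prod_bernoulliPGF (p : ι → ℝ) (hc : ∀ j ∈ s, 0 ≤ c j) :
    Continuous fun t => ∏ j ∈ s, bernoulliPGF (p j) (c j) t :=
  continuous_finsetProd s fun j hj => bernoulliPGF.continuous (hc j hj)

theorem sum_powerset_mul_inv_eq_setIntegral [DecidableEq ι] (p : ι → ℝ) {M : ℝ} (hM : 0 < M)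
    (hc : ∀ j ∈ s, 0 ≤ c j) :
    ∑ S ∈ s.powerset, ((∏ j ∈ S, p j) * ∏ j ∈ s \ S, (1 - p j)) * (M + ∑ j ∈ S, c j)⁻¹
      = ∫ t in Ioc 0 1, t ^ (M - 1) * ∏ j ∈ s, bernoulliPGF (p j) (c j) t := by
  have hpos : ∀ S ∈ s.powerset, 0 < M + ∑ j ∈ S, c j := fun S hS =>
    add_pos_of_pos_of_nonneg hM (sum_nonneg fun j hj => hc j (mem_powerset.mp hS hj))
  have hint : ∀ S ∈ s.powerset, Integrable (fun t : ℝ => ((∏ j ∈ S, p j) * ∏ j ∈ s \ S, (1 - p j))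
      * t ^ (M + ∑ j ∈ S, c j - 1)) (volume.restrict (Ioc 0 1)) := fun S hS =>
    ((intervalIntegrable_iff_integrableOn_Ioc_of_le zero_le_one).mp
      (intervalIntegral.intervalIntegrable_rpow' (by linarith [hpos S hS]))).const_mul _
  calc _ = ∑ S ∈ s.powerset, ∫ t in Ioc 0 1,
        ((∏ j ∈ S, p j) * ∏ j ∈ s \ S, (1 - p j)) * t ^ (M + ∑ j ∈ S, c j - 1) :=
        sum_congr rfl fun S hS => by
          rw [integral_const_mul, setIntegral_Ioc_rpow_sub_one (hpos S hS)]
    _ = ∫ t in Ioc 0 1, ∑ S ∈ s.powerset,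
        ((∏ j ∈ S, p j) * ∏ j ∈ s \ S, (1 - p j)) * t ^ (M + ∑ j ∈ S, c j - 1) :=
        (integral_finsetSum _ hint).symm
    _ = _ := setIntegral_congr_fun measurableSet_Ioc fun t ht => by
        simp only [bernoulliPGF, prod_add, mul_sum, prod_mul_distrib,
          ← Real.rpow_sum_of_pos ht.1, add_sub_right_comm M, Real.rpow_add ht.1]
        exact sum_congr rfl fun S _ => by ring

theorem setIntegral_rpow_mul_prod_bernoulliPGF_le {r : ℝ} (hr : -1 < r) {p p' : ι → ℝ}
    (hc : ∀ j ∈ s, 0 ≤ c j) (hp : ∀ j ∈ s, 0 ≤ p j) (hpp' : ∀ j ∈ s, p j ≤ p' j)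
    (hp' : ∀ j ∈ s, p' j ≤ 1) :
    ∫ t in Ioc 0 1, t ^ r * ∏ j ∈ s, bernoulliPGF (p' j) (c j) t
      ≤ ∫ t in Ioc 0 1, t ^ r * ∏ j ∈ s, bernoulliPGF (p j) (c j) t := by
  refine setIntegral_mono_on (integrableOn_Ioc_rpow_mul hr (continuous_prod_bernoulliPGF _ hc))
    (integrableOn_Ioc_rpow_mul hr (continuous_prod_bernoulliPGF _ hc)) measurableSet_Ioc
    fun t ht => mul_le_mul_of_nonneg_left ?_ (Real.rpow_nonneg ht.1.le _)
  exact prod_le_prod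
    (fun j hj => bernoulliPGF.nonneg ((hp j hj).trans (hpp' j hj)) (hp' j hj) ht.1.le)
    fun j hj => bernoulliPGF.antitone_prob (hc j hj) ht.1.le ht.2 (hpp' j hj)

theorem mul_rpow_sub_one_mul_prod_bernoulliPGF_le [DecidableEq ι] {M p t : ℝ}
    (hc : ∀ j ∈ s, 0 ≤ c j) (hcM : ∀ j ∈ s, c j ≤ M) (hp0 : 0 ≤ p) (hp1 : p ≤ 1)
    (ht0 : 0 < t) (ht1 : t ≤ 1) :
    p * (M + ∑ j ∈ s, c j) * (t ^ (M - 1) * ∏ j ∈ s, bernoulliPGF p (c j) t)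
      ≤ p * (M * t ^ (M - 1)) * ∏ j ∈ s, bernoulliPGF p (c j) t + bernoulliPGF p M t *
        ∑ j ∈ s, (∏ k ∈ s.erase j, bernoulliPGF p (c k) t) • (p * (c j * t ^ (c j - 1))) := by
  have hterm : ∀ j ∈ s, p * c j * (t ^ (M - 1) * ∏ k ∈ s, bernoulliPGF p (c k) t)
      ≤ bernoulliPGF p M t *
        ((∏ k ∈ s.erase j, bernoulliPGF p (c k) t) • (p * (c j * t ^ (c j - 1)))) := by
    intro j hj
    have hrest : 0 ≤ ∏ k ∈ s.erase j, bernoulliPGF p (c k) t :=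
      prod_nonneg fun k _ => bernoulliPGF.nonneg hp0 hp1 ht0.le
    calc p * c j * (t ^ (M - 1) * ∏ k ∈ s, bernoulliPGF p (c k) t)
        = p * c j * (∏ k ∈ s.erase j, bernoulliPGF p (c k) t)
          * (t ^ (M - 1) * bernoulliPGF p (c j) t) := by
          rw [← mul_prod_erase s _ hj]; ring
      _ ≤ p * c j * (∏ k ∈ s.erase j, bernoulliPGF p (c k) t)
          * (t ^ (c j - 1) * bernoulliPGF p M t) :=
          mul_le_mul_of_nonneg_left
            (bernoulliPGF.rpow_sub_one_mul_le hp1 (hcM j hj) ht0 ht1)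
            (mul_nonneg (mul_nonneg hp0 (hc j hj)) hrest)
      _ = _ := by rw [smul_eq_mul]; ring
  calc _ = p * (M * t ^ (M - 1)) * ∏ j ∈ s, bernoulliPGF p (c j) t
        + ∑ j ∈ s, p * c j * (t ^ (M - 1) * ∏ k ∈ s, bernoulliPGF p (c k) t) := by
        rw [← sum_mul, ← mul_sum]; ring
    _ ≤ _ := by
        rw [mul_sum]
        exact add_le_add le_rfl (sum_le_sum hterm)

theorem mul_setIntegral_rpow_mul_prod_bernoulliPGF_le_one {M p : ℝ} (hM : 0 < M)
    (hc : ∀ j ∈ s, 0 ≤ c j) (hcM : ∀ j ∈ s, c j ≤ M) (hp0 : 0 ≤ p) (hp1 : p ≤ 1) :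
    p * (M + ∑ j ∈ s, c j) * ∫ t in Ioc 0 1, t ^ (M - 1) * ∏ j ∈ s, bernoulliPGF p (c j) t
      ≤ 1 := by
  classical
  set G : ℝ → ℝ := fun t => ∏ j ∈ s, bernoulliPGF p (c j) t
  have hG : Continuous G := continuous_prod_bernoulliPGF _ hc
  have hderiv : ∀ t ∈ Ioo (0 : ℝ) 1, HasDerivAt (fun t => bernoulliPGF p M t * G t)
      (p * (M * t ^ (M - 1)) * G t + bernoulliPGF p M t *
        ∑ j ∈ s, (∏ k ∈ s.erase j, bernoulliPGF p (c k) t) • (p * (c j * t ^ (c j - 1)))) t :=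
    fun t ht => (bernoulliPGF.hasDerivAt ht.1.ne').mul
      (HasDerivAt.fun_finsetProd fun j _ => bernoulliPGF.hasDerivAt ht.1.ne')
  have hΦ0 : 0 ≤ bernoulliPGF p M 0 * G 0 :=
    mul_nonneg (bernoulliPGF.nonneg hp0 hp1 le_rfl)
      (prod_nonneg fun j _ => bernoulliPGF.nonneg hp0 hp1 le_rfl)
  have hΦ1 : bernoulliPGF p M 1 * G 1 = 1 := by simp [G]
  have hint : IntegrableOn (fun t => t ^ (M - 1) * G t) (Icc 0 1) := by
    rw [integrableOn_Icc_iff_integrableOn_Ioc]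
    exact integrableOn_Ioc_rpow_mul (by linarith) hG
  calc _ = ∫ t in (0 : ℝ)..1, p * (M + ∑ j ∈ s, c j) * (t ^ (M - 1) * G t) := by
        rw [intervalIntegral.integral_of_le zero_le_one, integral_const_mul]
    _ ≤ bernoulliPGF p M 1 * G 1 - bernoulliPGF p M 0 * G 0 :=
        intervalIntegral.integral_le_sub_of_hasDeriv_right_of_le zero_le_one
          (((bernoulliPGF.continuous hM.le).mul hG).continuousOn)
          (fun t ht => (hderiv t ht).hasDerivWithinAt)
          (hint.const_mul _)
          fun t ht => mul_rpow_sub_one_mul_prod_bernoulliPGF_le hc hcM hp0 hp1 ht.1 ht.2.le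
    _ ≤ 1 := by linarith

end GeneratingFunction

/-- **Inverse Binomial Lemma (weighted version; Ramdas–Barber–Wainwright–Jordan).**
Let `P 1, …, P n` be independent super-uniform random variables, `c j ≥ 0` deterministic
constants with maximum `c_max`, and `τ' ∈ (0,1)`. Then for each `i`,
`E[ 1 / (c_max + ∑_{j ≠ i} c j · 1{P j > τ'}) ] ≤ 1 / ((1 − τ') ∑_j c j)`. -/
theorem inverse_binomial_lemma
    {Ω : Type*} [MeasurableSpace Ω] (μ : Measure Ω) [IsProbabilityMeasure μ]
    (n : ℕ) [NeZero n]
    (P : Fin n → Ω → ℝ) (hPmeas : ∀ j, Measurable (P j))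
    (hindep : iIndepFun P μ)
    (hsuper : ∀ j, ∀ t ∈ Set.Icc (0 : ℝ) 1, μ {ω | P j ω ≤ t} ≤ ENNReal.ofReal t)
    (c : Fin n → ℝ) (hc : ∀ j, 0 ≤ c j) (hcsum : 0 < ∑ j, c j)
    (τ' : ℝ) (hτ' : τ' ∈ Set.Ioo (0 : ℝ) 1)
    (i : Fin n) :
    ∫ ω, (Finset.univ.sup' Finset.univ_nonempty c
        + ∑ j ∈ Finset.univ.erase i, c j * (if τ' < P j ω then 1 else 0))⁻¹ ∂μ
      ≤ 1 / ((1 - τ') * ∑ j, c j) := by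
  obtain ⟨hτ0, hτ1⟩ := hτ'
  set M := univ.sup' univ_nonempty c
  have hcM : ∀ j, c j ≤ M := fun j => le_sup' c (mem_univ j)
  have hM : 0 < M := by
    obtain ⟨j, -, hj⟩ :=
      exists_lt_of_sum_lt (s := univ) (f := fun _ => (0 : ℝ)) (by simpa using hcsum)
    exact hj.trans_le (hcM j)
  have hI : 0 ≤ ∫ t in Ioc 0 1, t ^ (M - 1) * ∏ j ∈ univ.erase i, bernoulliPGF (1 - τ') (c j) t :=
    setIntegral_nonneg measurableSet_Ioc fun t ht => mul_nonneg (Real.rpow_nonneg ht.1.le _)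
      (prod_nonneg fun j _ => bernoulliPGF.nonneg (by linarith) (by linarith) ht.1.le)
  calc _ = ∫ ω, (M + ∑ j ∈ {j ∈ univ.erase i | P j ω ∈ Ioi τ'}, c j)⁻¹ ∂μ := by
        simp only [mul_ite, mul_one, mul_zero, sum_filter, Set.mem_Ioi]
    _ = ∫ t in Ioc 0 1,
          t ^ (M - 1) * ∏ j ∈ univ.erase i, bernoulliPGF (μ.real (P j ⁻¹' Ioi τ')) (c j) t :=
        (integral_comp_filter_mem_preimage hindep hPmeas (fun _ => measurableSet_Ioi) _
          fun S => (M + ∑ j ∈ S, c j)⁻¹).trans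
            (sum_powerset_mul_inv_eq_setIntegral _ hM fun j _ => hc j)
    _ ≤ ∫ t in Ioc 0 1, t ^ (M - 1) * ∏ j ∈ univ.erase i, bernoulliPGF (1 - τ') (c j) t :=
        setIntegral_rpow_mul_prod_bernoulliPGF_le (by linarith) (fun j _ => hc j)
          (fun _ _ => by linarith)
          (fun j _ => one_sub_le_measureReal_preimage_Ioi (hPmeas j) hτ0.le
            (hsuper j τ' ⟨hτ0.le, hτ1.le⟩))
          fun _ _ => measureReal_le_one
    _ ≤ 1 / ((1 - τ') * ∑ j, c j) := by
        rw [le_div_iff₀ (mul_pos (by linarith) hcsum), mul_comm]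
        calc _ ≤ (1 - τ') * (M + ∑ j ∈ univ.erase i, c j) * _ := by
              rw [← add_sum_erase _ _ (mem_univ i)]
              gcongr
              exact hcM i
          _ ≤ 1 := mul_setIntegral_rpow_mul_prod_bernoulliPGF_le_one hM (fun j _ => hc j)
              (fun j _ => hcM j) (by linarith) (by linarith)
end
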